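/- arXiv:2604.13342 — 5 statements merged into one kernel-verified Lean document; each statement's English description precedes it below -/
import Mathlib

section
/- Let k ∈ ℤ, let h ∈ C_c^∞(ℝ) be a real-valued smooth function with support contained in the interval (1, 2), let α > 0 and let f : ℝ → [0, ∞) be three times continuously differentiable with |f(x)| ≤ α/(1+x²), |f'(x)| ≤ α/(1+x²), |f''(x)| ≤ α/(1+x²), |f'''(x)| ≤ α/(1+x²) for all x ∈ ℝ. Set g(x) = 1 + f(x) and for each n ∈ ℕ define φₙ(x, y) = n^{-1/2} h(x/n) e^{i k x} sin(y / g(x)) on the deformed strip Ω_f = {(x,y) ∈ ℝ² : 0 < y < π g(x)}. Then there is a constant C > 0 such that for all n ≥ 1, ∫_{Ω_f} |Δφₙ(x,y) + (1 + k²) φₙ(x,y)|² dx dy ≤ C / n². (This is the key estimate producing a Weyl sequence for the operator at energy μ = 1 + k², showing that every μ = 1+k² lies in the essential spectrum.) -/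
open MeasureTheory Real

private lemma wse_hE (κ : ℂ) (x : ℝ) :
    HasDerivAt (fun s : ℝ => Complex.exp (Complex.I * κ * (s : ℂ)))
      (Complex.I * κ * Complex.exp (Complex.I * κ * (x : ℂ))) x := by
  have h0 : HasDerivAt (fun s : ℝ => Complex.I * κ * (s : ℂ))
      (Complex.I * κ) x := by
    simpa using ((hasDerivAt_id x).ofReal_comp).const_mul (Complex.I * κ)
  have := h0.cexp
  simpa [mul_comm] using this

private lemma wse_d1 (κ : ℂ) {a a1 w w1 : ℝ → ℝ}
    (ha : ∀ x, HasDerivAt a (a1 x) x) (hw : ∀ x, HasDerivAt w (w1 x) x) (x : ℝ) :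
    HasDerivAt (fun s : ℝ => ((a s : ℝ) : ℂ) * Complex.exp (Complex.I * κ * (s : ℂ))
        * ((Real.sin (w s) : ℝ) : ℂ))
      (((a1 x : ℂ) * Complex.exp (Complex.I * κ * (x : ℂ))
          + (a x : ℂ) * (Complex.I * κ * Complex.exp (Complex.I * κ * (x : ℂ))))
          * ((Real.sin (w x) : ℝ) : ℂ)
        + ((a x : ℂ) * Complex.exp (Complex.I * κ * (x : ℂ)))
          * ((Real.cos (w x) * w1 x : ℝ) : ℂ)) x := by
  exact (((ha x).ofReal_comp).mul (wse_hE κ x)).mul (((hw x).sin).ofReal_comp)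

private lemma wse_d2 (κ : ℂ) {a a1 a2 w w1 w2 : ℝ → ℝ}
    (ha : ∀ x, HasDerivAt a (a1 x) x) (ha1 : ∀ x, HasDerivAt a1 (a2 x) x)
    (hw : ∀ x, HasDerivAt w (w1 x) x) (hw1 : ∀ x, HasDerivAt w1 (w2 x) x) (x : ℝ) :
    HasDerivAt (fun t : ℝ =>
      ((a1 t : ℂ) * Complex.exp (Complex.I * κ * (t : ℂ))
          + (a t : ℂ) * (Complex.I * κ * Complex.exp (Complex.I * κ * (t : ℂ))))
          * ((Real.sin (w t) : ℝ) : ℂ)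
        + ((a t : ℂ) * Complex.exp (Complex.I * κ * (t : ℂ)))
          * ((Real.cos (w t) * w1 t : ℝ) : ℂ))
      ((((a2 x : ℂ) * Complex.exp (Complex.I * κ * (x : ℂ))
            + (a1 x : ℂ) * (Complex.I * κ * Complex.exp (Complex.I * κ * (x : ℂ))))
          + ((a1 x : ℂ) * (Complex.I * κ * Complex.exp (Complex.I * κ * (x : ℂ)))
            + (a x : ℂ) * (Complex.I * κ
                * (Complex.I * κ * Complex.exp (Complex.I * κ * (x : ℂ))))))
          * ((Real.sin (w x) : ℝ) : ℂ)
        + ((a1 x : ℂ) * Complex.exp (Complex.I * κ * (x : ℂ))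
            + (a x : ℂ) * (Complex.I * κ * Complex.exp (Complex.I * κ * (x : ℂ))))
          * ((Real.cos (w x) * w1 x : ℝ) : ℂ)
        + (((a1 x : ℂ) * Complex.exp (Complex.I * κ * (x : ℂ))
            + (a x : ℂ) * (Complex.I * κ * Complex.exp (Complex.I * κ * (x : ℂ))))
            * ((Real.cos (w x) * w1 x : ℝ) : ℂ)
          + ((a x : ℂ) * Complex.exp (Complex.I * κ * (x : ℂ)))
            * ((-Real.sin (w x) * w1 x * w1 x + Real.cos (w x) * w2 x : ℝ) : ℂ))) x := by
  have hE := wse_hE κ x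
  have hP : HasDerivAt (fun t : ℝ =>
      (a1 t : ℂ) * Complex.exp (Complex.I * κ * (t : ℂ))
        + (a t : ℂ) * (Complex.I * κ * Complex.exp (Complex.I * κ * (t : ℂ))))
      (((a2 x : ℂ) * Complex.exp (Complex.I * κ * (x : ℂ))
          + (a1 x : ℂ) * (Complex.I * κ * Complex.exp (Complex.I * κ * (x : ℂ))))
        + ((a1 x : ℂ) * (Complex.I * κ * Complex.exp (Complex.I * κ * (x : ℂ)))
          + (a x : ℂ) * (Complex.I * κ
              * (Complex.I * κ * Complex.exp (Complex.I * κ * (x : ℂ)))))) x :=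
    (((ha1 x).ofReal_comp).mul hE).add (((ha x).ofReal_comp).mul (hE.const_mul _))
  have hQ : HasDerivAt (fun t : ℝ => ((Real.sin (w t) : ℝ) : ℂ))
      ((Real.cos (w x) * w1 x : ℝ) : ℂ) x := ((hw x).sin).ofReal_comp
  have hT : HasDerivAt (fun t : ℝ => ((Real.cos (w t) * w1 t : ℝ) : ℂ))
      ((-Real.sin (w x) * w1 x * w1 x + Real.cos (w x) * w2 x : ℝ) : ℂ) x := by
    have : HasDerivAt (fun t : ℝ => Real.cos (w t) * w1 t)
        ((-Real.sin (w x) * w1 x) * w1 x + Real.cos (w x) * w2 x) x :=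
      ((hw x).cos).mul (hw1 x)
    exact this.ofReal_comp
  exact (hP.mul hQ).add ((((ha x).ofReal_comp).mul hE).mul hT)

private lemma wse_dd (κ : ℂ) {a a1 a2 w w1 w2 : ℝ → ℝ}
    (ha : ∀ x, HasDerivAt a (a1 x) x) (ha1 : ∀ x, HasDerivAt a1 (a2 x) x)
    (hw : ∀ x, HasDerivAt w (w1 x) x) (hw1 : ∀ x, HasDerivAt w1 (w2 x) x) (x : ℝ) :
    deriv (fun t => deriv (fun s : ℝ => ((a s : ℝ) : ℂ)
        * Complex.exp (Complex.I * κ * (s : ℂ)) * ((Real.sin (w s) : ℝ) : ℂ)) t) x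
      = (((a2 x : ℂ) * Complex.exp (Complex.I * κ * (x : ℂ))
            + (a1 x : ℂ) * (Complex.I * κ * Complex.exp (Complex.I * κ * (x : ℂ))))
          + ((a1 x : ℂ) * (Complex.I * κ * Complex.exp (Complex.I * κ * (x : ℂ)))
            + (a x : ℂ) * (Complex.I * κ
                * (Complex.I * κ * Complex.exp (Complex.I * κ * (x : ℂ))))))
          * ((Real.sin (w x) : ℝ) : ℂ)
        + ((a1 x : ℂ) * Complex.exp (Complex.I * κ * (x : ℂ))
            + (a x : ℂ) * (Complex.I * κ * Complex.exp (Complex.I * κ * (x : ℂ))))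
          * ((Real.cos (w x) * w1 x : ℝ) : ℂ)
        + (((a1 x : ℂ) * Complex.exp (Complex.I * κ * (x : ℂ))
            + (a x : ℂ) * (Complex.I * κ * Complex.exp (Complex.I * κ * (x : ℂ))))
            * ((Real.cos (w x) * w1 x : ℝ) : ℂ)
          + ((a x : ℂ) * Complex.exp (Complex.I * κ * (x : ℂ)))
            * ((-Real.sin (w x) * w1 x * w1 x + Real.cos (w x) * w2 x : ℝ) : ℂ)) := by
  have h1 : (fun t => deriv (fun s : ℝ => ((a s : ℝ) : ℂ)
      * Complex.exp (Complex.I * κ * (s : ℂ)) * ((Real.sin (w s) : ℝ) : ℂ)) t)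
      = fun t : ℝ =>
      ((a1 t : ℂ) * Complex.exp (Complex.I * κ * (t : ℂ))
          + (a t : ℂ) * (Complex.I * κ * Complex.exp (Complex.I * κ * (t : ℂ))))
          * ((Real.sin (w t) : ℝ) : ℂ)
        + ((a t : ℂ) * Complex.exp (Complex.I * κ * (t : ℂ)))
          * ((Real.cos (w t) * w1 t : ℝ) : ℂ) :=
    funext fun t => (wse_d1 κ ha hw t).deriv
  rw [h1]
  exact (wse_d2 κ ha ha1 hw hw1 x).deriv

private lemma wse_y (C0 : ℂ) (b : ℝ) (y : ℝ) :
    deriv (fun t => deriv (fun s : ℝ => C0 * ((Real.sin (s / b) : ℝ) : ℂ)) t) y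
      = C0 * ((-Real.sin (y / b) * (1 / b) * (1 / b) : ℝ) : ℂ) := by
  have h1 : (fun t => deriv (fun s : ℝ => C0 * ((Real.sin (s / b) : ℝ) : ℂ)) t)
      = fun t : ℝ => C0 * ((Real.cos (t / b) * (1 / b) : ℝ) : ℂ) := by
    refine funext fun t => ?_
    exact (((((hasDerivAt_id t).div_const b).sin).ofReal_comp).const_mul C0).deriv
  rw [h1]
  exact (((((((hasDerivAt_id y).div_const b).cos).mul_const (1 / b))).ofReal_comp).const_mul
    C0).deriv

private lemma wse_two_derivs {f : ℝ → ℝ} (hf : ContDiff ℝ 3 f) :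
    (∀ x, HasDerivAt f (deriv f x) x) ∧ ∀ x, HasDerivAt (deriv f) (deriv (deriv f) x) x := by
  have h3 : ContDiff ℝ ((2 : ℕ) + 1) f := by exact_mod_cast hf
  have hd : Differentiable ℝ f := hf.differentiable (by norm_num)
  have hd1 : Differentiable ℝ (deriv f) :=
    ((contDiff_succ_iff_deriv.mp h3).2.2).differentiable (by norm_num)
  exact ⟨fun x => (hd x).hasDerivAt, fun x => (hd1 x).hasDerivAt⟩

private lemma wse_norm9 (z1 z2 z3 z4 z5 z6 z7 z8 z9 : ℂ) :
    ‖z1 + z2 + z3 + z4 + z5 + z6 + z7 + z8 + z9‖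
      ≤ ‖z1‖ + ‖z2‖ + ‖z3‖ + ‖z4‖ + ‖z5‖ + ‖z6‖ + ‖z7‖ + ‖z8‖ + ‖z9‖ := by
  calc ‖z1 + z2 + z3 + z4 + z5 + z6 + z7 + z8 + z9‖
      ≤ ‖z1 + z2 + z3 + z4 + z5 + z6 + z7 + z8‖ + ‖z9‖ := norm_add_le _ _
    _ ≤ ‖z1 + z2 + z3 + z4 + z5 + z6 + z7‖ + ‖z8‖ + ‖z9‖ := by
        gcongr; exact norm_add_le _ _
    _ ≤ ‖z1 + z2 + z3 + z4 + z5 + z6‖ + ‖z7‖ + ‖z8‖ + ‖z9‖ := by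
        gcongr; exact norm_add_le _ _
    _ ≤ ‖z1 + z2 + z3 + z4 + z5‖ + ‖z6‖ + ‖z7‖ + ‖z8‖ + ‖z9‖ := by
        gcongr; exact norm_add_le _ _
    _ ≤ ‖z1 + z2 + z3 + z4‖ + ‖z5‖ + ‖z6‖ + ‖z7‖ + ‖z8‖ + ‖z9‖ := by
        gcongr; exact norm_add_le _ _
    _ ≤ ‖z1 + z2 + z3‖ + ‖z4‖ + ‖z5‖ + ‖z6‖ + ‖z7‖ + ‖z8‖ + ‖z9‖ := by
        gcongr; exact norm_add_le _ _
    _ ≤ ‖z1 + z2‖ + ‖z3‖ + ‖z4‖ + ‖z5‖ + ‖z6‖ + ‖z7‖ + ‖z8‖ + ‖z9‖ := by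
        gcongr; exact norm_add_le _ _
    _ ≤ ‖z1‖ + ‖z2‖ + ‖z3‖ + ‖z4‖ + ‖z5‖ + ‖z6‖ + ‖z7‖ + ‖z8‖ + ‖z9‖ := by
        gcongr; exact norm_add_le _ _
set_option maxHeartbeats 4000000 in
/-- The key Weyl-sequence estimate: for
`φₙ(x,y) = n^{-1/2} h(x/n) e^{ikx} sin(y/g(x))` one has
`∫_{Ω_f} |Δφₙ + (1+k²)φₙ|² ≤ C/n²`. -/
theorem weyl_sequence_estimate
    (k : ℤ) (h : ℝ → ℝ) (hh : ContDiff ℝ (⊤ : ℕ∞) h) (hhsupp : HasCompactSupport h)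
    (hhsub : tsupport h ⊆ Set.Ioo 1 2)
    (α : ℝ) (hα : 0 < α)
    (f : ℝ → ℝ) (hf0 : ∀ x, 0 ≤ f x) (hf : ContDiff ℝ 3 f)
    (hb0 : ∀ x, |f x| ≤ α / (1 + x ^ 2))
    (hb1 : ∀ x, |deriv f x| ≤ α / (1 + x ^ 2))
    (hb2 : ∀ x, |deriv (deriv f) x| ≤ α / (1 + x ^ 2))
    (hb3 : ∀ x, |deriv (deriv (deriv f)) x| ≤ α / (1 + x ^ 2))
    (g : ℝ → ℝ) (hg : ∀ x, g x = 1 + f x)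
    (φ : ℕ → ℝ × ℝ → ℂ)
    (hφ : ∀ (n : ℕ) (x y : ℝ), φ n (x, y) =
      (((n : ℝ) ^ (-(1 / 2 : ℝ)) * h (x / n) : ℝ) : ℂ)
        * Complex.exp (Complex.I * (k : ℂ) * (x : ℂ))
        * ((Real.sin (y / g x) : ℝ) : ℂ)) :
    ∃ C : ℝ, 0 < C ∧ ∀ n : ℕ, 1 ≤ n →
      (∫ x : ℝ, ∫ y in Set.Ioo 0 (π * g x),
        ‖(deriv (fun t => deriv (fun s => φ n (s, y)) t) x
            + deriv (fun t => deriv (fun s => φ n (x, s)) t) y)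
          + ((1 + (k : ℝ) ^ 2 : ℝ) : ℂ) * φ n (x, y)‖ ^ 2)
        ≤ C / n ^ 2 := by
  -- Bound for h and its first two derivatives
  obtain ⟨M, hM1, hMb⟩ : ∃ M : ℝ, 1 ≤ M ∧ ∀ t : ℝ,
      |h t| ≤ M ∧ |deriv h t| ≤ M ∧ |deriv (deriv h) t| ≤ M := by
    obtain ⟨M0, hM0⟩ := hhsupp.exists_bound_of_continuous hh.continuous
    have hh3 : ContDiff ℝ ((2:ℕ) + 1) h := hh.of_le (WithTop.coe_le_coe.mpr le_top)
    have hh2 : ContDiff ℝ ((1:ℕ) + 1) (deriv h) := by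
      have := (contDiff_succ_iff_deriv.mp hh3).2.2
      exact_mod_cast this
    obtain ⟨M1, hM1'⟩ := hhsupp.deriv.exists_bound_of_continuous hh2.continuous
    have hh1 : ContDiff ℝ ((0:ℕ) + 1) (deriv (deriv h)) := by
      have := (contDiff_succ_iff_deriv.mp hh2).2.2
      exact_mod_cast this
    obtain ⟨M2, hM2⟩ := hhsupp.deriv.deriv.exists_bound_of_continuous hh1.continuous
    refine ⟨max 1 (max M0 (max M1 M2)), le_max_left _ _, fun t => ?_⟩
    have e0 := hM0 t; have e1 := hM1' t; have e2 := hM2 t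
    rw [Real.norm_eq_abs] at e0 e1 e2
    refine ⟨?_, ?_, ?_⟩ <;>
      [exact e0.trans ((le_max_left _ _).trans (le_max_right _ _));
       exact e1.trans (((le_max_left _ _).trans (le_max_right _ _)).trans (le_max_right _ _));
       exact e2.trans (((le_max_right _ _).trans (le_max_right _ _)).trans (le_max_right _ _))]
  -- derivatives of h and f
  have hh3 : ContDiff ℝ 3 h := hh.of_le (WithTop.coe_le_coe.mpr le_top)
  obtain ⟨hhd, hhd2⟩ := wse_two_derivs hh3
  obtain ⟨hfd, hfd2⟩ := wse_two_derivs hf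
  -- facts about g
  have hg1 : ∀ x, 1 ≤ g x := fun x => by rw [hg]; linarith [hf0 x]
  have hgne : ∀ x, g x ≠ 0 := fun x => by have := hg1 x; linarith
  have hgd : ∀ x, HasDerivAt g (deriv f x) x := by
    intro x
    have : HasDerivAt (fun t => 1 + f t) (deriv f x) x := (hfd x).const_add 1
    have hgg : g = fun t => 1 + f t := funext hg
    rw [hgg]; exact this
  have hfα : ∀ x, f x ≤ α := fun x =>
    le_trans (le_trans (le_abs_self _) (hb0 x)) (by
      rw [div_le_iff₀ (by positivity)]; nlinarith [sq_nonneg x])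
  have hgα : ∀ x, g x ≤ 1 + α := fun x => by rw [hg]; linarith [hfα x]
  set kA := |(k : ℝ)| with hkA
  set P := π * (1 + α) with hP
  have hPpos : 0 < P := by positivity
  set K := M * (1 + 2 * kA + 2 * P * α + 2 * kA * P * α
      + α * (P ^ 2 * α + P + 2 * P * α) + α * (2 + α)) with hK
  have hKpos : 0 < K := by positivity
  clear_value kA P K
  refine ⟨P * K ^ 2, by positivity, fun n hn => ?_⟩
  have hN1 : (1:ℝ) ≤ (n:ℝ) := by exact_mod_cast hn
  have hNpos : (0:ℝ) < (n:ℝ) := by linarith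
  set c := (n:ℝ) ^ (-(1/2 : ℝ)) with hc
  have hcpos : 0 < c := Real.rpow_pos_of_pos hNpos _
  set q := 1 / (n:ℝ) with hq
  have hqpos : 0 < q := by rw [hq]; positivity
  have hq1 : q ≤ 1 := by rw [hq]; rw [div_le_one hNpos]; exact hN1
  -- derivative data for the x-direction
  have ha : ∀ t : ℝ, HasDerivAt (fun s : ℝ => c * h (s / (n:ℝ)))
      (c * (deriv h (t / (n:ℝ)) * q)) t := by
    intro t
    have h1 : HasDerivAt (fun s : ℝ => h (s / (n:ℝ))) (deriv h (t / (n:ℝ)) * q) t := by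
      rw [hq]
      exact (hhd (t / (n:ℝ))).comp t ((hasDerivAt_id t).div_const (n:ℝ))
    exact h1.const_mul c
  have ha1 : ∀ t : ℝ, HasDerivAt (fun s : ℝ => c * (deriv h (s / (n:ℝ)) * q))
      (c * (deriv (deriv h) (t / (n:ℝ)) * q * q)) t := by
    intro t
    have h1 : HasDerivAt (fun s : ℝ => deriv h (s / (n:ℝ)))
        (deriv (deriv h) (t / (n:ℝ)) * q) t := by
      rw [hq]
      exact (hhd2 (t / (n:ℝ))).comp t ((hasDerivAt_id t).div_const (n:ℝ))
    exact (h1.mul_const q).const_mul c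
  -- pointwise bound on the residual
  have key : ∀ x ∈ Set.Icc (n:ℝ) (2*(n:ℝ)), ∀ y ∈ Set.Ioo 0 (π * g x),
      ‖(deriv (fun t => deriv (fun s => φ n (s, y)) t) x
          + deriv (fun t => deriv (fun s => φ n (x, s)) t) y)
        + ((1 + (k : ℝ) ^ 2 : ℝ) : ℂ) * φ n (x, y)‖ ≤ c * q * K := by
    intro x hx y hy
    have hw : ∀ t : ℝ, HasDerivAt (fun s : ℝ => y / g s)
        ((0 * g t - y * deriv f t) / g t ^ 2) t :=
      fun t => (hasDerivAt_const t y).div (hgd t) (hgne t)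
    have hw1 : ∀ t : ℝ, HasDerivAt (fun s : ℝ => (0 * g s - y * deriv f s) / g s ^ 2)
        (-(y * deriv (deriv f) t) / g t ^ 2 + 2 * y * deriv f t ^ 2 / g t ^ 3) t := by
      intro t
      have hnum : HasDerivAt (fun s : ℝ => 0 * g s - y * deriv f s)
          (0 * deriv f t - y * deriv (deriv f) t) t :=
        ((hgd t).const_mul 0).sub ((hfd2 t).const_mul y)
      have hden : HasDerivAt (fun s : ℝ => g s ^ 2) (2 * g t ^ 1 * deriv f t) t := by
        simpa using (hgd t).fun_pow 2
      have hq2 := hnum.div hden (pow_ne_zero 2 (hgne t))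
      refine hq2.congr_deriv ?_
      have h0 : g t ≠ 0 := hgne t
      rw [div_add_div _ _ (pow_ne_zero 2 h0) (pow_ne_zero 3 h0),
        div_eq_div_iff (pow_ne_zero 2 (pow_ne_zero 2 h0))
          (mul_ne_zero (pow_ne_zero 2 h0) (pow_ne_zero 3 h0))]
      ring
    have hFeq : (fun s => φ n (s, y)) = fun s : ℝ =>
        ((c * h (s / (n:ℝ)) : ℝ) : ℂ) * Complex.exp (Complex.I * (k : ℂ) * (s : ℂ))
          * ((Real.sin (y / g s) : ℝ) : ℂ) := funext fun s => hφ n s y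
    have hdx : deriv (fun t => deriv (fun s => φ n (s, y)) t) x =
        (((c * (deriv (deriv h) (x / (n:ℝ)) * q * q) : ℝ) : ℂ)
              * Complex.exp (Complex.I * (k : ℂ) * (x : ℂ))
            + ((c * (deriv h (x / (n:ℝ)) * q) : ℝ) : ℂ)
              * (Complex.I * (k : ℂ) * Complex.exp (Complex.I * (k : ℂ) * (x : ℂ)))
          + (((c * (deriv h (x / (n:ℝ)) * q) : ℝ) : ℂ)
              * (Complex.I * (k : ℂ) * Complex.exp (Complex.I * (k : ℂ) * (x : ℂ)))
            + ((c * h (x / (n:ℝ)) : ℝ) : ℂ) * (Complex.I * (k : ℂ)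
                * (Complex.I * (k : ℂ) * Complex.exp (Complex.I * (k : ℂ) * (x : ℂ))))))
          * ((Real.sin (y / g x) : ℝ) : ℂ)
        + (((c * (deriv h (x / (n:ℝ)) * q) : ℝ) : ℂ)
              * Complex.exp (Complex.I * (k : ℂ) * (x : ℂ))
            + ((c * h (x / (n:ℝ)) : ℝ) : ℂ)
              * (Complex.I * (k : ℂ) * Complex.exp (Complex.I * (k : ℂ) * (x : ℂ))))
          * ((Real.cos (y / g x) * ((0 * g x - y * deriv f x) / g x ^ 2) : ℝ) : ℂ)
        + ((((c * (deriv h (x / (n:ℝ)) * q) : ℝ) : ℂ)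
              * Complex.exp (Complex.I * (k : ℂ) * (x : ℂ))
            + ((c * h (x / (n:ℝ)) : ℝ) : ℂ)
              * (Complex.I * (k : ℂ) * Complex.exp (Complex.I * (k : ℂ) * (x : ℂ))))
            * ((Real.cos (y / g x) * ((0 * g x - y * deriv f x) / g x ^ 2) : ℝ) : ℂ)
          + (((c * h (x / (n:ℝ)) : ℝ) : ℂ)
              * Complex.exp (Complex.I * (k : ℂ) * (x : ℂ)))
            * ((-Real.sin (y / g x) * ((0 * g x - y * deriv f x) / g x ^ 2)
                  * ((0 * g x - y * deriv f x) / g x ^ 2)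
                + Real.cos (y / g x)
                  * (-(y * deriv (deriv f) x) / g x ^ 2 + 2 * y * deriv f x ^ 2 / g x ^ 3)
                : ℝ) : ℂ)) := by
      rw [hFeq]
      exact wse_dd (k : ℂ) ha ha1 hw hw1 x
    have hdy : deriv (fun t => deriv (fun s => φ n (x, s)) t) y =
        (((c * h (x / (n:ℝ)) : ℝ) : ℂ) * Complex.exp (Complex.I * (k : ℂ) * (x : ℂ)))
          * ((-Real.sin (y / g x) * (1 / g x) * (1 / g x) : ℝ) : ℂ) := by
      have hYeq : (fun s => φ n (x, s)) = fun s : ℝ =>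
          (((c * h (x / (n:ℝ)) : ℝ) : ℂ) * Complex.exp (Complex.I * (k : ℂ) * (x : ℂ)))
            * ((Real.sin (s / g x) : ℝ) : ℂ) := funext fun s => hφ n x s
      rw [hYeq]
      exact wse_y _ (g x) y
    have hstep : (deriv (fun t => deriv (fun s => φ n (s, y)) t) x
          + deriv (fun t => deriv (fun s => φ n (x, s)) t) y)
        + ((1 + (k : ℝ) ^ 2 : ℝ) : ℂ) * φ n (x, y)
        = ((c * (deriv (deriv h) (x / (n:ℝ)) * q * q) : ℝ) : ℂ) * Complex.exp (Complex.I * (k : ℂ) * (x : ℂ)) * ((Real.sin (y / g x) : ℝ) : ℂ) + ((c * (deriv h (x / (n:ℝ)) * q) : ℝ) : ℂ) * (Complex.I * (k : ℂ) * Complex.exp (Complex.I * (k : ℂ) * (x : ℂ))) * ((Real.sin (y / g x) : ℝ) : ℂ) + ((c * (deriv h (x / (n:ℝ)) * q) : ℝ) : ℂ) * (Complex.I * (k : ℂ) * Complex.exp (Complex.I * (k : ℂ) * (x : ℂ))) * ((Real.sin (y / g x) : ℝ) : ℂ) + (((c * (deriv h (x / (n:ℝ)) * q) : ℝ) : ℂ)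 * Complex.exp (Complex.I * (k : ℂ) * (x : ℂ))) * ((Real.cos (y / g x) * ((0 * g x - y * deriv f x) / g x ^ 2) : ℝ) : ℂ) + (((c * (deriv h (x / (n:ℝ)) * q) : ℝ) : ℂ) * Complex.exp (Complex.I * (k : ℂ) * (x : ℂ))) * ((Real.cos (y / g x) * ((0 * g x - y * deriv f x) / g x ^ 2) : ℝ) : ℂ) + (((c * h (x / (n:ℝ)) : ℝ) : ℂ) * (Complex.I * (k : ℂ) * Complex.exp (Complex.I * (k : ℂ) * (x : ℂ)))) * ((Real.cos (y / g x) * ((0 * g x - y * deriv f x) / g x ^ 2) : ℝ) : ℂ) + (((c * h (x / (n:ℝ)) : ℝ) : ℂ) * (Complex.I * (k : ℂ) * Complex.exp (Complex.I * (k : ℂ) * (x : ℂ)))) * ((Real.cos (y / g x) * ((0 * g x - y * deriv f x) / g x ^ 2) : ℝ) : ℂ) + (((c * h (x / (n:ℝ)) : ℝ) : ℂ) * Complex.exp (Complex.I * (k : ℂ) * (x : ℂ))) * ((-Real.sin (y / g x) * ((0 * g x - y * deriv f x) / g x ^ 2) * ((0 * g x - y * deriv f x) / g x ^ 2) + Real.cos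 (y / g x) * (-(y * deriv (deriv f) x) / g x ^ 2 + 2 * y * deriv f x ^ 2 / g x ^ 3) : ℝ) : ℂ) + ((c * h (x / (n:ℝ)) : ℝ) : ℂ) * Complex.exp (Complex.I * (k : ℂ) * (x : ℂ)) * ((Real.sin (y / g x) : ℝ) : ℂ) * (((1 - 1 / g x ^ 2) : ℝ) : ℂ) := by
      rw [hdx, hdy, hφ n x y]
      push_cast
      linear_combination ((k : ℂ)) ^ 2 * ((c : ℝ) : ℂ) * ((h (x / (n:ℝ)) : ℝ) : ℂ)
        * Complex.exp (Complex.I * (k : ℂ) * (x : ℂ))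
        * Complex.sin ((y : ℂ) / ((g x : ℝ) : ℂ)) * Complex.I_sq
    -- real bounds
    have hxn : (n:ℝ) ≤ x := hx.1
    have h1x2 : (n:ℝ) ^ 2 ≤ 1 + x ^ 2 := by nlinarith [hx.2]
    have hdecay : ∀ z : ℝ, |z| ≤ α / (1 + x ^ 2) → |z| ≤ α * q ^ 2 := by
      intro z hz
      refine hz.trans ?_
      have hnn : (0:ℝ) < (n:ℝ) ^ 2 := by positivity
      have h2 : α / (1 + x ^ 2) ≤ α / (n:ℝ) ^ 2 :=
        div_le_div_of_nonneg_left hα.le hnn h1x2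
      refine h2.trans (le_of_eq ?_)
      rw [hq]
      field_simp
    have hfb : |f x| ≤ α * q ^ 2 := hdecay _ (hb0 x)
    have hf1b : |deriv f x| ≤ α * q ^ 2 := hdecay _ (hb1 x)
    have hf2b : |deriv (deriv f) x| ≤ α * q ^ 2 := hdecay _ (hb2 x)
    have hqq : α * q ^ 2 ≤ α := by
      have hq2 : q ^ 2 ≤ 1 := pow_le_one₀ hqpos.le hq1
      exact mul_le_of_le_one_right hα.le hq2
    have hf1α : |deriv f x| ≤ α := hf1b.trans hqq
    have hgx1 : 1 ≤ g x := hg1 x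
    have hyP : |y| ≤ P := by
      rw [abs_of_pos hy.1]
      refine hy.2.le.trans ?_
      rw [hP]
      nlinarith [Real.pi_pos, hgα x]
    have hsin : |Real.sin (y / g x)| ≤ 1 :=
      abs_le.mpr ⟨Real.neg_one_le_sin _, Real.sin_le_one _⟩
    have hcos : |Real.cos (y / g x)| ≤ 1 :=
      abs_le.mpr ⟨Real.neg_one_le_cos _, Real.cos_le_one _⟩
    have hg2abs : (1:ℝ) ≤ |g x ^ 2| := by
      rw [abs_of_pos (by positivity)]
      nlinarith
    have hg3abs : (1:ℝ) ≤ |g x ^ 3| := by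
      rw [abs_of_pos (by positivity)]
      nlinarith
    have hw1v : |((0 * g x - y * deriv f x) / g x ^ 2)| ≤ P * (α * q ^ 2) := by
      rw [zero_mul, zero_sub, abs_div, abs_neg, abs_mul]
      calc |y| * |deriv f x| / |g x ^ 2| ≤ |y| * |deriv f x| :=
            div_le_self (by positivity) hg2abs
        _ ≤ P * (α * q ^ 2) := mul_le_mul hyP hf1b (abs_nonneg _) hPpos.le
    have hqq2 : α * q ^ 2 ≤ α * q := by
      calc α * q ^ 2 = α * q * q := by ring
        _ ≤ α * q * 1 := mul_le_mul_of_nonneg_left hq1 (by positivity)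
        _ = α * q := mul_one _
    have hw1vα : |((0 * g x - y * deriv f x) / g x ^ 2)| ≤ P * α :=
      hw1v.trans (mul_le_mul_of_nonneg_left hqq hPpos.le)
    have hw1vq : |((0 * g x - y * deriv f x) / g x ^ 2)| ≤ P * α * q :=
      hw1v.trans (le_trans (mul_le_mul_of_nonneg_left hqq2 hPpos.le) (le_of_eq (by ring)))
    have hw2v : |-(y * deriv (deriv f) x) / g x ^ 2 + 2 * y * deriv f x ^ 2 / g x ^ 3|
        ≤ P * (α * q ^ 2) + 2 * P * α * (α * q ^ 2) := by
      refine (abs_add_le _ _).trans (add_le_add ?_ ?_)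
      · rw [abs_div, abs_neg, abs_mul]
        calc |y| * |deriv (deriv f) x| / |g x ^ 2| ≤ |y| * |deriv (deriv f) x| :=
              div_le_self (by positivity) hg2abs
          _ ≤ P * (α * q ^ 2) := mul_le_mul hyP hf2b (abs_nonneg _) hPpos.le
      · rw [abs_div,
          show |2 * y * deriv f x ^ 2| = 2 * |y| * |deriv f x| ^ 2 by
            rw [abs_mul, abs_mul, abs_pow]; norm_num]
        calc 2 * |y| * |deriv f x| ^ 2 / |g x ^ 3| ≤ 2 * |y| * |deriv f x| ^ 2 :=
              div_le_self (by positivity) hg3abs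
          _ ≤ 2 * P * α * (α * q ^ 2) := by
              nlinarith [abs_nonneg y, abs_nonneg (deriv f x),
                mul_le_mul hf1α hf1b (abs_nonneg _) hα.le]
    have h1g : |1 - 1 / g x ^ 2| ≤ (2 + α) * (α * q ^ 2) := by
      have hfx0 := hf0 x
      have hfxb : f x ≤ α * q ^ 2 := (le_abs_self _).trans hfb
      have hgxe : g x = 1 + f x := hg x
      have hgne' : g x ≠ 0 := hgne x
      have e1 : 1 - 1 / g x ^ 2 = (g x ^ 2 - 1) / g x ^ 2 := by field_simp
      rw [e1, abs_div]
      have h2 : |g x ^ 2 - 1| ≤ (2 + α) * (α * q ^ 2) := by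
        rw [abs_of_nonneg (by nlinarith)]
        rw [hgxe]
        nlinarith [hfxb, hfx0, mul_le_mul (hfα x) hfxb hfx0 hα.le]
      calc |g x ^ 2 - 1| / |g x ^ 2| ≤ |g x ^ 2 - 1| := div_le_self (abs_nonneg _) hg2abs
        _ ≤ _ := h2
    have hA : |c * h (x / (n:ℝ))| ≤ c * M := by
      rw [abs_mul, abs_of_pos hcpos]
      exact mul_le_mul_of_nonneg_left (hMb _).1 hcpos.le
    have hA1 : |c * (deriv h (x / (n:ℝ)) * q)| ≤ c * M * q := by
      rw [abs_mul, abs_mul, abs_of_pos hcpos, abs_of_pos hqpos]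
      have h1 : |deriv h (x / (n:ℝ))| * q ≤ M * q :=
        mul_le_mul_of_nonneg_right (hMb _).2.1 hqpos.le
      calc c * (|deriv h (x / (n:ℝ))| * q) ≤ c * (M * q) :=
            mul_le_mul_of_nonneg_left h1 hcpos.le
        _ = c * M * q := by ring
    have hA2 : |c * (deriv (deriv h) (x / (n:ℝ)) * q * q)| ≤ c * M * q := by
      rw [abs_mul, abs_mul, abs_mul, abs_of_pos hcpos, abs_of_pos hqpos]
      have h1 : |deriv (deriv h) (x / (n:ℝ))| * q ≤ M * q :=
        mul_le_mul_of_nonneg_right (hMb _).2.2 hqpos.le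
      have h2 : |deriv (deriv h) (x / (n:ℝ))| * q * q ≤ M * q * 1 :=
        mul_le_mul h1 hq1 hqpos.le (by positivity)
      calc c * (|deriv (deriv h) (x / (n:ℝ))| * q * q) ≤ c * (M * q * 1) :=
            mul_le_mul_of_nonneg_left h2 hcpos.le
        _ = c * M * q := by ring
    -- norms of complex pieces
    have he1 : ‖Complex.exp (Complex.I * (k : ℂ) * (x : ℂ))‖ = 1 := by
      rw [show Complex.I * (k : ℂ) * (x : ℂ) = (((k : ℝ) * x : ℝ) : ℂ) * Complex.I by
        push_cast; ring]
      rw [Complex.norm_exp_ofReal_mul_I]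
    have hκ : ‖Complex.I * (k : ℂ) * Complex.exp (Complex.I * (k : ℂ) * (x : ℂ))‖ = kA := by
      rw [norm_mul, norm_mul, Complex.norm_I, he1, one_mul, mul_one]
      rw [show ((k : ℤ) : ℂ) = (((k : ℝ) : ℝ) : ℂ) by push_cast; ring]
      rw [Complex.norm_real, Real.norm_eq_abs, hkA]
    have hkA0 : 0 ≤ kA := by rw [hkA]; exact abs_nonneg _
    have hdvq : |Real.cos (y / g x) * ((0 * g x - y * deriv f x) / g x ^ 2)| ≤ P * α * q := by
      rw [abs_mul]
      calc |Real.cos (y / g x)| * |((0 * g x - y * deriv f x) / g x ^ 2)| ≤ 1 * (P * α * q) :=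
            mul_le_mul hcos hw1vq (abs_nonneg _) one_pos.le
        _ = P * α * q := one_mul _
    have hdvα : |Real.cos (y / g x) * ((0 * g x - y * deriv f x) / g x ^ 2)| ≤ P * α := by
      rw [abs_mul]
      calc |Real.cos (y / g x)| * |((0 * g x - y * deriv f x) / g x ^ 2)| ≤ 1 * (P * α) :=
            mul_le_mul hcos hw1vα (abs_nonneg _) one_pos.le
        _ = P * α := one_mul _
    have hd2v : |-Real.sin (y / g x) * ((0 * g x - y * deriv f x) / g x ^ 2) * ((0 * g x - y * deriv f x) / g x ^ 2) + Real.cos (y / g x) * (-(y * deriv (deriv f) x) / g x ^ 2 + 2 * y * deriv f x ^ 2 / g x ^ 3)|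
        ≤ P * α * (P * (α * q ^ 2)) + (P * (α * q ^ 2) + 2 * P * α * (α * q ^ 2)) := by
      refine (abs_add_le _ _).trans (add_le_add ?_ ?_)
      · rw [abs_mul, abs_mul, abs_neg]
        calc |Real.sin (y / g x)| * |((0 * g x - y * deriv f x) / g x ^ 2)| * |((0 * g x - y * deriv f x) / g x ^ 2)|
            ≤ 1 * (P * α) * (P * (α * q ^ 2)) := by
              refine mul_le_mul (mul_le_mul hsin hw1vα (abs_nonneg _) one_pos.le) hw1v
                (abs_nonneg _) (by positivity)
          _ = P * α * (P * (α * q ^ 2)) := by ring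
      · rw [abs_mul]
        calc |Real.cos (y / g x)| * |(-(y * deriv (deriv f) x) / g x ^ 2 + 2 * y * deriv f x ^ 2 / g x ^ 3)|
            ≤ 1 * (P * (α * q ^ 2) + 2 * P * α * (α * q ^ 2)) :=
              mul_le_mul hcos hw2v (abs_nonneg _) one_pos.le
          _ = P * (α * q ^ 2) + 2 * P * α * (α * q ^ 2) := one_mul _
    -- bounds for the nine summands
    have hZ1 : ‖((c * (deriv (deriv h) (x / (n:ℝ)) * q * q) : ℝ) : ℂ) * Complex.exp (Complex.I * (k : ℂ) * (x : ℂ)) * ((Real.sin (y / g x) : ℝ) : ℂ)‖ ≤ c * q * M := by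
      rw [norm_mul, norm_mul, he1, mul_one, Complex.norm_real, Complex.norm_real,
        Real.norm_eq_abs, Real.norm_eq_abs]
      calc |c * (deriv (deriv h) (x / (n:ℝ)) * q * q)| * |Real.sin (y / g x)|
          ≤ c * M * q * 1 := mul_le_mul hA2 hsin (abs_nonneg _) (by positivity)
        _ = c * q * M := by ring
    have hZ2 : ‖((c * (deriv h (x / (n:ℝ)) * q) : ℝ) : ℂ) * (Complex.I * (k : ℂ) * Complex.exp (Complex.I * (k : ℂ) * (x : ℂ))) * ((Real.sin (y / g x) : ℝ) : ℂ)‖ ≤ c * q * (M * kA) := by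
      rw [norm_mul, norm_mul, hκ, Complex.norm_real, Complex.norm_real,
        Real.norm_eq_abs, Real.norm_eq_abs]
      calc |c * (deriv h (x / (n:ℝ)) * q)| * kA * |Real.sin (y / g x)|
          ≤ c * M * q * kA * 1 := by
            refine mul_le_mul (mul_le_mul_of_nonneg_right hA1 hkA0) hsin (abs_nonneg _)
              (by positivity)
        _ = c * q * (M * kA) := by ring
    have hZ3 : ‖(((c * (deriv h (x / (n:ℝ)) * q) : ℝ) : ℂ) * Complex.exp (Complex.I * (k : ℂ) * (x : ℂ))) * ((Real.cos (y / g x) * ((0 * g x - y * deriv f x) / g x ^ 2) : ℝ) : ℂ)‖ ≤ c * q * (M * (P * α)) := by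
      rw [norm_mul, norm_mul, he1, mul_one, Complex.norm_real, Complex.norm_real,
        Real.norm_eq_abs, Real.norm_eq_abs]
      calc |c * (deriv h (x / (n:ℝ)) * q)| * |Real.cos (y / g x) * ((0 * g x - y * deriv f x) / g x ^ 2)|
          ≤ c * M * q * (P * α) := mul_le_mul hA1 hdvα (abs_nonneg _) (by positivity)
        _ = c * q * (M * (P * α)) := by ring
    have hZ4 : ‖(((c * h (x / (n:ℝ)) : ℝ) : ℂ) * (Complex.I * (k : ℂ) * Complex.exp (Complex.I * (k : ℂ) * (x : ℂ)))) * ((Real.cos (y / g x) * ((0 * g x - y * deriv f x) / g x ^ 2) : ℝ) : ℂ)‖ ≤ c * q * (M * (kA * P * α)) := by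
      rw [norm_mul, norm_mul, hκ, Complex.norm_real, Complex.norm_real,
        Real.norm_eq_abs, Real.norm_eq_abs]
      calc |c * h (x / (n:ℝ))| * kA * |Real.cos (y / g x) * ((0 * g x - y * deriv f x) / g x ^ 2)|
          ≤ c * M * kA * (P * α * q) := by
            refine mul_le_mul (mul_le_mul_of_nonneg_right hA hkA0) hdvq (abs_nonneg _)
              (by positivity)
        _ = c * q * (M * (kA * P * α)) := by ring
    have hZ5 : ‖(((c * h (x / (n:ℝ)) : ℝ) : ℂ) * Complex.exp (Complex.I * (k : ℂ) * (x : ℂ))) * ((-Real.sin (y / g x) * ((0 * g x - y * deriv f x) / g x ^ 2) * ((0 * g x - y * deriv f x) / g x ^ 2) + Real.cos (y / g x) * (-(y * deriv (deriv f) x) / g x ^ 2 + 2 * y * deriv f x ^ 2 / g x ^ 3) : ℝ) : ℂ)‖ ≤ c * q * (M * (α * (P ^ 2 * α + P + 2 * P * α))) := by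
      rw [norm_mul, norm_mul, he1, mul_one, Complex.norm_real, Complex.norm_real,
        Real.norm_eq_abs, Real.norm_eq_abs]
      calc |c * h (x / (n:ℝ))| * |-Real.sin (y / g x) * ((0 * g x - y * deriv f x) / g x ^ 2) * ((0 * g x - y * deriv f x) / g x ^ 2) + Real.cos (y / g x) * (-(y * deriv (deriv f) x) / g x ^ 2 + 2 * y * deriv f x ^ 2 / g x ^ 3)|
          ≤ c * M * (P * α * (P * (α * q ^ 2)) + (P * (α * q ^ 2) + 2 * P * α * (α * q ^ 2))) :=
            mul_le_mul hA hd2v (abs_nonneg _) (by positivity)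
        _ = c * q * (M * (α * (P ^ 2 * α + P + 2 * P * α))) * q := by ring
        _ ≤ c * q * (M * (α * (P ^ 2 * α + P + 2 * P * α))) * 1 :=
            mul_le_mul_of_nonneg_left hq1 (by positivity)
        _ = c * q * (M * (α * (P ^ 2 * α + P + 2 * P * α))) := mul_one _
    have hZ6 : ‖((c * h (x / (n:ℝ)) : ℝ) : ℂ) * Complex.exp (Complex.I * (k : ℂ) * (x : ℂ)) * ((Real.sin (y / g x) : ℝ) : ℂ) * (((1 - 1 / g x ^ 2) : ℝ) : ℂ)‖
        ≤ c * q * (M * (α * (2 + α))) := by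
      rw [norm_mul, norm_mul, norm_mul, he1, mul_one, Complex.norm_real, Complex.norm_real,
        Complex.norm_real, Real.norm_eq_abs, Real.norm_eq_abs, Real.norm_eq_abs]
      calc |c * h (x / (n:ℝ))| * |Real.sin (y / g x)| * |1 - 1 / g x ^ 2|
          ≤ c * M * 1 * ((2 + α) * (α * q ^ 2)) := by
            refine mul_le_mul (mul_le_mul hA hsin (abs_nonneg _) (by positivity)) h1g
              (abs_nonneg _) (by positivity)
        _ = c * q * (M * (α * (2 + α))) * q := by ring
        _ ≤ c * q * (M * (α * (2 + α))) * 1 :=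
            mul_le_mul_of_nonneg_left hq1 (by positivity)
        _ = c * q * (M * (α * (2 + α))) := mul_one _
    rw [hstep]
    refine (wse_norm9 _ _ _ _ _ _ _ _ _).trans ?_
    have hKe : c * q * M + c * q * (M * kA) + c * q * (M * kA) + c * q * (M * (P * α))
        + c * q * (M * (P * α)) + c * q * (M * (kA * P * α)) + c * q * (M * (kA * P * α))
        + c * q * (M * (α * (P ^ 2 * α + P + 2 * P * α))) + c * q * (M * (α * (2 + α)))
        = c * q * K := by rw [hK]; ring
    linarith [hZ1, hZ2, hZ3, hZ4, hZ5, hZ6]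
  -- squared pointwise bound
  have hsq : (c * q * K) ^ 2 = K ^ 2 / (n:ℝ) ^ 3 := by
    have hc2 : c ^ 2 = 1 / (n:ℝ) := by
      rw [hc, ← Real.rpow_natCast ((n:ℝ) ^ (-(1/2 : ℝ))) 2, ← Real.rpow_mul hNpos.le]
      rw [show (-(1/2 : ℝ)) * ((2:ℕ):ℝ) = -1 by norm_num, Real.rpow_neg_one]
      exact (one_div _).symm
    have : (c * q * K) ^ 2 = c ^ 2 * q ^ 2 * K ^ 2 := by ring
    rw [this, hc2, hq]
    field_simp
  have key2 : ∀ x ∈ Set.Icc (n:ℝ) (2*(n:ℝ)), ∀ y ∈ Set.Ioo 0 (π * g x),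
      (‖(deriv (fun t => deriv (fun s => φ n (s, y)) t) x
          + deriv (fun t => deriv (fun s => φ n (x, s)) t) y)
        + ((1 + (k : ℝ) ^ 2 : ℝ) : ℂ) * φ n (x, y)‖) ^ 2 ≤ K ^ 2 / (n:ℝ) ^ 3 := by
    intro x hx y hy
    calc (‖(deriv (fun t => deriv (fun s => φ n (s, y)) t) x
          + deriv (fun t => deriv (fun s => φ n (x, s)) t) y)
        + ((1 + (k : ℝ) ^ 2 : ℝ) : ℂ) * φ n (x, y)‖) ^ 2 ≤ (c * q * K) ^ 2 :=
          pow_le_pow_left₀ (norm_nonneg _) (key x hx y hy) 2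
      _ = K ^ 2 / (n:ℝ) ^ 3 := hsq
  -- vanishing off the support interval
  have hh0 : ∀ z : ℝ, z ∉ Set.Icc (n:ℝ) (2*(n:ℝ)) → h (z / (n:ℝ)) = 0 := by
    intro z hz
    apply image_eq_zero_of_notMem_tsupport
    intro hmem
    obtain ⟨h1, h2⟩ := hhsub hmem
    exact hz ⟨((one_lt_div hNpos).mp h1).le, ((div_lt_iff₀ hNpos).mp h2).le⟩
  have hφ0 : ∀ z : ℝ, z ∉ Set.Icc (n:ℝ) (2*(n:ℝ)) → ∀ y' : ℝ, φ n (z, y') = 0 := by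
    intro z hz y'
    rw [hφ, hh0 z hz]
    simp
  have hzero : ∀ x : ℝ, x ∉ Set.Icc (n:ℝ) (2*(n:ℝ)) → ∀ y : ℝ,
      (‖(deriv (fun t => deriv (fun s => φ n (s, y)) t) x
          + deriv (fun t => deriv (fun s => φ n (x, s)) t) y)
        + ((1 + (k : ℝ) ^ 2 : ℝ) : ℂ) * φ n (x, y)‖) ^ 2 = 0 := by
    intro x hx y
    have hopen : IsOpen (Set.Icc (n:ℝ) (2*(n:ℝ)))ᶜ := isClosed_Icc.isOpen_compl
    have hxmem : x ∈ (Set.Icc (n:ℝ) (2*(n:ℝ)))ᶜ := hx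
    have hev1 : deriv (fun t => deriv (fun s => φ n (s, y)) t) x = 0 := by
      have hloc : ∀ z ∈ (Set.Icc (n:ℝ) (2*(n:ℝ)))ᶜ, deriv (fun s => φ n (s, y)) z = 0 := by
        intro z hz
        have hev : (fun s => φ n (s, y)) =ᶠ[nhds z] fun _ => (0:ℂ) :=
          Filter.eventually_of_mem (hopen.mem_nhds hz) (fun w hw => hφ0 w hw y)
        rw [hev.deriv_eq]
        exact deriv_const z 0
      have hev' : (fun t => deriv (fun s => φ n (s, y)) t) =ᶠ[nhds x] fun _ => (0:ℂ) :=
        Filter.eventually_of_mem (hopen.mem_nhds hxmem) hloc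
      rw [hev'.deriv_eq]
      exact deriv_const x 0
    have hev2 : deriv (fun t => deriv (fun s => φ n (x, s)) t) y = 0 := by
      have hfun : (fun s => φ n (x, s)) = fun _ => (0:ℂ) := funext fun s => hφ0 x hx s
      rw [hfun]
      simp
    rw [hev1, hev2, hφ0 x hx y]
    simp
  -- integration
  by_cases hInt : Integrable (fun x => ∫ y in Set.Ioo 0 (π * g x), (‖(deriv (fun t => deriv (fun s => φ n (s, y)) t) x
          + deriv (fun t => deriv (fun s => φ n (x, s)) t) y)
        + ((1 + (k : ℝ) ^ 2 : ℝ) : ℂ) * φ n (x, y)‖) ^ 2) volume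
  · have hGb : ∀ x ∈ Set.Icc (n:ℝ) (2*(n:ℝ)),
        (∫ y in Set.Ioo 0 (π * g x), (‖(deriv (fun t => deriv (fun s => φ n (s, y)) t) x
          + deriv (fun t => deriv (fun s => φ n (x, s)) t) y)
        + ((1 + (k : ℝ) ^ 2 : ℝ) : ℂ) * φ n (x, y)‖) ^ 2) ≤ P * (K ^ 2 / (n:ℝ) ^ 3) := by
      intro x hx
      by_cases hi : Integrable (fun y => (‖(deriv (fun t => deriv (fun s => φ n (s, y)) t) x
          + deriv (fun t => deriv (fun s => φ n (x, s)) t) y)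
        + ((1 + (k : ℝ) ^ 2 : ℝ) : ℂ) * φ n (x, y)‖) ^ 2) (volume.restrict (Set.Ioo 0 (π * g x)))
      · calc (∫ y in Set.Ioo 0 (π * g x), (‖(deriv (fun t => deriv (fun s => φ n (s, y)) t) x
          + deriv (fun t => deriv (fun s => φ n (x, s)) t) y)
        + ((1 + (k : ℝ) ^ 2 : ℝ) : ℂ) * φ n (x, y)‖) ^ 2)
            ≤ ∫ _ in Set.Ioo 0 (π * g x), K ^ 2 / (n:ℝ) ^ 3 :=
              setIntegral_mono_on hi
                (integrableOn_const (by
                  rw [Real.volume_Ioo]; exact ENNReal.ofReal_ne_top))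
                measurableSet_Ioo (key2 x hx)
          _ = (volume (Set.Ioo 0 (π * g x))).toReal * (K ^ 2 / (n:ℝ) ^ 3) := by
              rw [setIntegral_const, smul_eq_mul]; rfl
          _ ≤ P * (K ^ 2 / (n:ℝ) ^ 3) := by
              refine mul_le_mul_of_nonneg_right ?_ (by positivity)
              rw [Real.volume_Ioo, ENNReal.toReal_ofReal (by nlinarith [Real.pi_pos, hg1 x])]
              rw [hP]
              nlinarith [Real.pi_pos, hgα x]
      · rw [integral_undef hi]
        positivity
    have hGz : ∀ x : ℝ, x ∉ Set.Icc (n:ℝ) (2*(n:ℝ)) →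
        (∫ y in Set.Ioo 0 (π * g x), (‖(deriv (fun t => deriv (fun s => φ n (s, y)) t) x
          + deriv (fun t => deriv (fun s => φ n (x, s)) t) y)
        + ((1 + (k : ℝ) ^ 2 : ℝ) : ℂ) * φ n (x, y)‖) ^ 2) = 0 := by
      intro x hx
      have : (fun y => (‖(deriv (fun t => deriv (fun s => φ n (s, y)) t) x
          + deriv (fun t => deriv (fun s => φ n (x, s)) t) y)
        + ((1 + (k : ℝ) ^ 2 : ℝ) : ℂ) * φ n (x, y)‖) ^ 2) = fun _ => (0:ℝ) := funext fun y => hzero x hx y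
      rw [this]
      simp
    calc (∫ x : ℝ, ∫ y in Set.Ioo 0 (π * g x), (‖(deriv (fun t => deriv (fun s => φ n (s, y)) t) x
          + deriv (fun t => deriv (fun s => φ n (x, s)) t) y)
        + ((1 + (k : ℝ) ^ 2 : ℝ) : ℂ) * φ n (x, y)‖) ^ 2)
        = ∫ x : ℝ, (Set.Icc (n:ℝ) (2*(n:ℝ))).indicator
            (fun x => ∫ y in Set.Ioo 0 (π * g x), (‖(deriv (fun t => deriv (fun s => φ n (s, y)) t) x
          + deriv (fun t => deriv (fun s => φ n (x, s)) t) y)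
        + ((1 + (k : ℝ) ^ 2 : ℝ) : ℂ) * φ n (x, y)‖) ^ 2) x := by
          refine integral_congr_ae (Filter.Eventually.of_forall fun x => ?_)
          by_cases hx : x ∈ Set.Icc (n:ℝ) (2*(n:ℝ))
          · simp only [Set.indicator_of_mem hx]
          · simp only [Set.indicator_of_notMem hx]
            exact hGz x hx
      _ = ∫ x in Set.Icc (n:ℝ) (2*(n:ℝ)), ∫ y in Set.Ioo 0 (π * g x), (‖(deriv (fun t => deriv (fun s => φ n (s, y)) t) x
          + deriv (fun t => deriv (fun s => φ n (x, s)) t) y)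
        + ((1 + (k : ℝ) ^ 2 : ℝ) : ℂ) * φ n (x, y)‖) ^ 2 :=
          integral_indicator measurableSet_Icc
      _ ≤ ∫ _ in Set.Icc (n:ℝ) (2*(n:ℝ)), P * (K ^ 2 / (n:ℝ) ^ 3) :=
          setIntegral_mono_on hInt.integrableOn
            (integrableOn_const (by
              rw [Real.volume_Icc]; exact ENNReal.ofReal_ne_top))
            measurableSet_Icc hGb
      _ = (volume (Set.Icc (n:ℝ) (2*(n:ℝ)))).toReal * (P * (K ^ 2 / (n:ℝ) ^ 3)) := by
          rw [setIntegral_const, smul_eq_mul]; rfl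
      _ ≤ P * K ^ 2 / (n:ℕ) ^ 2 := by
          rw [Real.volume_Icc, ENNReal.toReal_ofReal (by linarith)]
          have hne : (n:ℝ) ≠ 0 := hNpos.ne'
          have : (2*(n:ℝ) - (n:ℝ)) * (P * (K ^ 2 / (n:ℝ) ^ 3)) = P * K ^ 2 / (n:ℝ) ^ 2 := by
            field_simp
            ring
          rw [this]
  · rw [integral_undef hInt]
    positivity
end

section
/- Let h ∈ C_c^∞(ℝ) be a real-valued smooth function supported in the interval (1, 2) with ∫_ℝ h(x)² dx = 1, let f : ℝ → [0, ∞) be continuous with f(x) → 0 as |x| → ∞ (in particular, if |f(x)| ≤ α/(1+x²)), set g = 1 + f, and for n ∈ ℕ and k ∈ ℤ define φₙ(x, y) = n^{-1/2} h(x/n) e^{i k x} sin(y / g(x)) on Ω_f = {(x,y) : 0 < y < π g(x)}. Then for every n, ∫_{Ω_f} |φₙ(x,y)|² dx dy = (π/2) ∫_1^2 (1 + f(n x)) h(x)² dx, and consequently ∫_{Ω_f} |φₙ|² dx dy → π/2 as n → ∞. -/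
open MeasureTheory Real

/-- Normalization of the Weyl sequence: the `L²`-norm of
`φₙ(x,y) = n^{-1/2} h(x/n) e^{ikx} sin(y/g(x))` over the deformed strip equals
`(π/2)∫_1^2 (1 + f(nx)) h(x)² dx` and tends to `π/2`. -/
theorem weyl_sequence_normalization
    (h : ℝ → ℝ) (hh : ContDiff ℝ (⊤ : ℕ∞) h) (hhsupp : HasCompactSupport h)
    (hhsub : tsupport h ⊆ Set.Ioo 1 2)
    (hnorm : (∫ x : ℝ, h x ^ 2) = 1)
    (f : ℝ → ℝ) (hfc : Continuous f) (hf0 : ∀ x, 0 ≤ f x)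
    (hflim : Filter.Tendsto f (Filter.cocompact ℝ) (nhds 0))
    (g : ℝ → ℝ) (hg : ∀ x, g x = 1 + f x)
    (k : ℤ)
    (φ : ℕ → ℝ × ℝ → ℂ)
    (hφ : ∀ (n : ℕ) (x y : ℝ), φ n (x, y) =
      (((n : ℝ) ^ (-(1 / 2 : ℝ)) * h (x / n) : ℝ) : ℂ)
        * Complex.exp (Complex.I * (k : ℂ) * (x : ℂ))
        * ((Real.sin (y / g x) : ℝ) : ℂ)) :
    (∀ n : ℕ, 1 ≤ n →
      (∫ x : ℝ, ∫ y in Set.Ioo 0 (π * g x), ‖φ n (x, y)‖ ^ 2)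
        = (π / 2) * ∫ x in Set.Ioo (1 : ℝ) 2, (1 + f (n * x)) * h x ^ 2) ∧
    Filter.Tendsto
      (fun n : ℕ => ∫ x : ℝ, ∫ y in Set.Ioo 0 (π * g x), ‖φ n (x, y)‖ ^ 2)
      Filter.atTop (nhds (π / 2)) := by
  have hgpos : ∀ x, 0 < g x := fun x => by rw [hg]; linarith [hf0 x]
  have hzero : ∀ x : ℝ, x ∉ Set.Ioo (1 : ℝ) 2 → h x = 0 := fun x hx =>
    image_eq_zero_of_notMem_tsupport (fun hm => hx (hhsub hm))
  -- the inner `sin²` integral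
  have hsin : ∀ x : ℝ, (∫ y in Set.Ioo 0 (π * g x), Real.sin (y / g x) ^ 2)
      = g x * (π / 2) := by
    intro x
    have hc := hgpos x
    rw [← integral_Ioc_eq_integral_Ioo,
      ← intervalIntegral.integral_of_le (by positivity),
      intervalIntegral.integral_comp_div (fun y => Real.sin y ^ 2) hc.ne',
      zero_div, mul_div_assoc, div_self hc.ne', mul_one, integral_sin_sq]
    simp [smul_eq_mul]
  -- the key identity
  have key : ∀ n : ℕ, 1 ≤ n →
      (∫ x : ℝ, ∫ y in Set.Ioo 0 (π * g x), ‖φ n (x, y)‖ ^ 2)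
        = (π / 2) * ∫ x in Set.Ioo (1 : ℝ) 2, (1 + f (n * x)) * h x ^ 2 := by
    intro n hn
    have hn0 : (0 : ℝ) < (n : ℝ) := by exact_mod_cast hn
    have hr2 : ((n : ℝ) ^ (-(1 / 2 : ℝ))) ^ 2 = (n : ℝ)⁻¹ := by
      rw [← Real.rpow_natCast ((n : ℝ) ^ (-(1 / 2 : ℝ))) 2,
        ← Real.rpow_mul (Nat.cast_nonneg n)]
      norm_num [Real.rpow_neg_one]
    have hfun : ∀ x y : ℝ, ‖φ n (x, y)‖ ^ 2
        = (n : ℝ)⁻¹ * h (x / n) ^ 2 * Real.sin (y / g x) ^ 2 := by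
      intro x y
      rw [hφ]
      have he : ‖Complex.exp (Complex.I * (k : ℂ) * (x : ℂ))‖ = 1 := by
        rw [Complex.norm_exp]
        simp [mul_comm, mul_assoc]
      rw [norm_mul, norm_mul, he, mul_one, Complex.norm_real, Complex.norm_real,
        Real.norm_eq_abs, Real.norm_eq_abs, mul_pow, sq_abs, sq_abs, mul_pow, hr2]
    have hinner : ∀ x : ℝ, (∫ y in Set.Ioo 0 (π * g x), ‖φ n (x, y)‖ ^ 2)
        = ((n : ℝ)⁻¹ * (π / 2)) * ((1 + f (n * (x / n))) * h (x / n) ^ 2) := by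
      intro x
      simp only [hfun]
      rw [integral_const_mul, hsin x, mul_div_cancel₀ _ hn0.ne', ← hg]
      ring
    simp only [hinner]
    have heq : (∫ x : ℝ, ((n : ℝ)⁻¹ * (π / 2)) * ((1 + f ((n : ℝ) * (x / (n : ℝ)))) * h (x / (n : ℝ)) ^ 2))
        = |(n : ℝ)| • ∫ u : ℝ, ((n : ℝ)⁻¹ * (π / 2)) * ((1 + f ((n : ℝ) * u)) * h u ^ 2) :=
      MeasureTheory.Measure.integral_comp_div
        (fun u : ℝ => ((n : ℝ)⁻¹ * (π / 2)) * ((1 + f ((n : ℝ) * u)) * h u ^ 2)) (n : ℝ)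
    rw [heq,
      integral_const_mul, smul_eq_mul, abs_of_pos hn0,
      setIntegral_eq_integral_of_forall_compl_eq_zero
        (fun x hx => by rw [hzero x hx]; ring)]
    field_simp
  refine ⟨key, ?_⟩
  -- boundedness of f
  obtain ⟨K, hK, hK1⟩ : ∃ K : Set ℝ, IsCompact K ∧ ∀ x ∉ K, |f x| ≤ 1 := by
    have := Filter.hasBasis_cocompact.eventually_iff.mp
      (Metric.tendsto_nhds.mp hflim 1 one_pos)
    obtain ⟨K, hK, hK1⟩ := this
    exact ⟨K, hK, fun x hx => by
      have := hK1 hx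
      rw [Real.dist_eq, sub_zero] at this
      linarith⟩
  obtain ⟨C, hC⟩ := hK.exists_bound_of_continuousOn hfc.continuousOn
  set M : ℝ := max C 1 with hMdef
  have hM : ∀ x, |f x| ≤ M := by
    intro x
    by_cases hx : x ∈ K
    · exact le_trans (by simpa [Real.norm_eq_abs] using hC x hx) (le_max_left _ _)
    · exact le_trans (hK1 x hx) (le_max_right _ _)
  have hM0 : (0 : ℝ) ≤ M := le_trans (abs_nonneg _) (hM 0)
  -- h² is integrable
  have hh2cont : Continuous fun x : ℝ => h x ^ 2 := (hh.continuous).pow 2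
  have hh2supp : HasCompactSupport fun x : ℝ => h x ^ 2 := by
    apply HasCompactSupport.comp_left hhsupp (g := fun t : ℝ => t ^ 2)
    simp
  have hh2int : Integrable (fun x : ℝ => h x ^ 2) :=
    hh2cont.integrable_of_hasCompactSupport hh2supp
  -- dominated convergence
  have hDCT : Filter.Tendsto
      (fun n : ℕ => ∫ x in Set.Ioo (1 : ℝ) 2, (1 + f (n * x)) * h x ^ 2)
      Filter.atTop (nhds (∫ x in Set.Ioo (1 : ℝ) 2, h x ^ 2)) := by
    refine tendsto_integral_of_dominated_convergence
      (fun x => (1 + M) * h x ^ 2) ?_ ?_ ?_ ?_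
    · intro n
      exact ((continuous_const.add
        (hfc.comp (continuous_const.mul continuous_id))).mul hh2cont).aestronglyMeasurable
    · exact (hh2int.const_mul (1 + M)).integrableOn
    · intro n
      refine Filter.Eventually.of_forall fun x => ?_
      rw [Real.norm_eq_abs, abs_mul,
        abs_of_nonneg (by linarith [hf0 ((n : ℝ) * x)] : (0:ℝ) ≤ 1 + f ((n : ℝ) * x)),
        abs_of_nonneg (by positivity : (0:ℝ) ≤ h x ^ 2)]
      have hfM : f ((n : ℝ) * x) ≤ M := le_trans (le_abs_self _) (hM _)
      show (1 + f ((n : ℝ) * x)) * h x ^ 2 ≤ (1 + M) * h x ^ 2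
      nlinarith [sq_nonneg (h x)]
    · refine (ae_restrict_iff' measurableSet_Ioo).mpr
        (Filter.Eventually.of_forall fun x hx => ?_)
      have hx0 : (0 : ℝ) < x := lt_trans one_pos hx.1
      have h1 : Filter.Tendsto (fun n : ℕ => (n : ℝ) * x) Filter.atTop Filter.atTop :=
        Filter.Tendsto.atTop_mul_const hx0 tendsto_natCast_atTop_atTop
      have h2 : Filter.Tendsto (fun n : ℕ => f ((n : ℝ) * x)) Filter.atTop (nhds 0) :=
        hflim.comp (h1.mono_right (by rw [cocompact_eq_atBot_atTop]; exact le_sup_right))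
      have h3 : Filter.Tendsto (fun n : ℕ => (1 + f ((n : ℝ) * x)) * h x ^ 2)
          Filter.atTop (nhds ((1 + 0) * h x ^ 2)) :=
        ((tendsto_const_nhds.add h2).mul tendsto_const_nhds)
      simpa using h3
  have hint12 : (∫ x in Set.Ioo (1 : ℝ) 2, h x ^ 2) = 1 := by
    rw [setIntegral_eq_integral_of_forall_compl_eq_zero
      (fun x hx => by rw [hzero x hx]; ring), hnorm]
  have hT : Filter.Tendsto
      (fun n : ℕ => (π / 2) * ∫ x in Set.Ioo (1 : ℝ) 2, (1 + f (n * x)) * h x ^ 2)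
      Filter.atTop (nhds (π / 2)) := by
    have := hDCT.const_mul (π / 2)
    rw [hint12, mul_one] at this
    exact this
  refine hT.congr' ?_
  filter_upwards [Filter.eventually_ge_atTop 1] with n hn
  exact (key n hn).symm
end

section
/- Let B : ℝ² → ℝ be a continuously differentiable function with compact support, and define â₁(x, y) = −y ∫_0^1 B(u x, u y) u du and â₂(x, y) = x ∫_0^1 B(u x, u y) u du. Then â₁ and â₂ are bounded functions on ℝ²; in particular they are bounded on the strip Ω₀ = ℝ × (0, π). -/
open MeasureTheory Real

/-- Boundedness of the transversal-gauge potential: if the `C¹` magnetic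
field `B` has compact support, then `â₁` and `â₂` are bounded on `ℝ²` (in particular on the
strip `Ω₀ = ℝ × (0, π)`). -/
theorem poincare_gauge_bounded
    (B : ℝ × ℝ → ℝ) (hB : ContDiff ℝ 1 B) (hBsupp : HasCompactSupport B)
    (a₁ a₂ : ℝ → ℝ → ℝ)
    (ha₁ : ∀ x y : ℝ, a₁ x y = -y * ∫ u in (0 : ℝ)..1, B (u * x, u * y) * u)
    (ha₂ : ∀ x y : ℝ, a₂ x y = x * ∫ u in (0 : ℝ)..1, B (u * x, u * y) * u) :
    ∃ M : ℝ, ∀ x y : ℝ, |a₁ x y| ≤ M ∧ |a₂ x y| ≤ M := by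
  obtain ⟨C, hC⟩ := hBsupp.exists_bound_of_continuous hB.continuous
  have hC0 : 0 ≤ C := le_trans (norm_nonneg _) (hC 0)
  obtain ⟨R', hR'⟩ := hBsupp.isCompact.isBounded.subset_closedBall 0
  set R : ℝ := max R' 0 with hRdef
  have hR0 : 0 ≤ R := le_max_right _ _
  have hR : tsupport B ⊆ Metric.closedBall 0 R :=
    hR'.trans (Metric.closedBall_subset_closedBall (le_max_left _ _))
  have key1 : ∀ x y : ℝ, ∀ u : ℝ, ‖x * (B (u * x, u * y) * u)‖ ≤ R * C := by
    intro x y u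
    rcases eq_or_ne (B (u * x, u * y)) 0 with h | h
    · simp [h]; positivity
    · have hmem := hR (subset_tsupport B h)
      have hnorm : ‖(u * x, u * y)‖ ≤ R := by
        simpa [Metric.mem_closedBall, dist_zero_right] using hmem
      have h1 : |u * x| ≤ R := le_trans (norm_fst_le (u * x, u * y)) hnorm
      have h2 : |B (u * x, u * y)| ≤ C := hC _
      calc ‖x * (B (u * x, u * y) * u)‖ = |u * x| * |B (u * x, u * y)| := by
            rw [Real.norm_eq_abs, abs_mul, abs_mul, abs_mul]; ring
        _ ≤ R * C := mul_le_mul h1 h2 (abs_nonneg _) hR0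
  have key2 : ∀ x y : ℝ, ∀ u : ℝ, ‖y * (B (u * x, u * y) * u)‖ ≤ R * C := by
    intro x y u
    rcases eq_or_ne (B (u * x, u * y)) 0 with h | h
    · simp [h]; positivity
    · have hmem := hR (subset_tsupport B h)
      have hnorm : ‖(u * x, u * y)‖ ≤ R := by
        simpa [Metric.mem_closedBall, dist_zero_right] using hmem
      have h1 : |u * y| ≤ R := le_trans (norm_snd_le (u * x, u * y)) hnorm
      have h2 : |B (u * x, u * y)| ≤ C := hC _
      calc ‖y * (B (u * x, u * y) * u)‖ = |u * y| * |B (u * x, u * y)| := by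
            rw [Real.norm_eq_abs, abs_mul, abs_mul, abs_mul]; ring
        _ ≤ R * C := mul_le_mul h1 h2 (abs_nonneg _) hR0
  refine ⟨R * C, fun x y => ⟨?_, ?_⟩⟩
  · rw [ha₁]
    have : -y * ∫ u in (0 : ℝ)..1, B (u * x, u * y) * u
        = -(∫ u in (0 : ℝ)..1, y * (B (u * x, u * y) * u)) := by
      rw [intervalIntegral.integral_const_mul]; ring
    rw [this, abs_neg]
    have := intervalIntegral.norm_integral_le_of_norm_le_const
      (C := R * C) (a := (0:ℝ)) (b := 1)
      (f := fun u => y * (B (u * x, u * y) * u)) (fun u _ => key2 x y u)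
    simpa [abs_mul] using this
  · rw [ha₂]
    have : x * ∫ u in (0 : ℝ)..1, B (u * x, u * y) * u
        = ∫ u in (0 : ℝ)..1, x * (B (u * x, u * y) * u) := by
      rw [intervalIntegral.integral_const_mul]
    rw [this]
    have := intervalIntegral.norm_integral_le_of_norm_le_const
      (C := R * C) (a := (0:ℝ)) (b := 1)
      (f := fun u => x * (B (u * x, u * y) * u)) (fun u _ => key1 x y u)
    simpa [abs_mul] using this
end

section
/- Let f : ℝ → [0, ∞) be continuously differentiable, set g = 1 + f, let a₁, a₂ : ℝ² → ℝ be continuous, and let ψ : ℝ² → ℂ be a smooth function compactly supported in Ω_f = {(x,y) : 0 < y < π g(x)}. Define φ(x, y) = g(x)^{1/2} ψ(x, g(x) y) for (x,y) in the straight strip Ω₀ = ℝ × (0, π), and set ã₁(x, y) = a₁(x, g(x) y), ã₂(x, y) = a₂(x, g(x) y). Then ∫_{Ω_f} ( |i ψ_x + a₁ ψ|² + |i ψ_y + a₂ ψ|² ) dx dy = ∫_{Ω₀} ( |i φ_x + ã₁ φ|² + |i φ_y + ã₂ φ|² ) dx dy − I(φ), where I(φ) = ∫_{Ω₀} [ (g'/(2g))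 ( conj(φ_x) φ + φ_x conj(φ) ) + (g'/g) y ( conj(φ_x) φ_y + φ_x conj(φ_y) ) − i (ã₁ g'/g) y ( conj(φ_y) φ − φ_y conj(φ) ) + (g'/(2g))² |φ|² − (g'/g)² y² |φ_y|² + (1 − 1/g²) |φ_y|² + i ã₂ (1 − 1/g) ( φ_y conj(φ) − conj(φ_y) φ ) ] dx dy. -/
open MeasureTheory Real

set_option maxHeartbeats 1600000 in
/-- Transfer of the magnetic quadratic form from the deformed strip
`Ω_f` to the straight strip `Ω₀` via `φ(x,y) = √(g x) · ψ(x, g(x) y)`: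
`q_{Ω_f}[ψ] = ∫_{Ω₀} |i∇φ + Ãφ|² − I(φ)`. -/
theorem quadratic_form_transfer
    (f : ℝ → ℝ) (hf0 : ∀ x, 0 ≤ f x) (hf : ContDiff ℝ 1 f)
    (g : ℝ → ℝ) (hg : ∀ x, g x = 1 + f x)
    (a₁ a₂ : ℝ × ℝ → ℝ) (hc₁ : Continuous a₁) (hc₂ : Continuous a₂)
    (ψ : ℝ × ℝ → ℂ) (hψ : ContDiff ℝ (⊤ : ℕ∞) ψ) (hψsupp : HasCompactSupport ψ)
    (hψsub : tsupport ψ ⊆ {p : ℝ × ℝ | 0 < p.2 ∧ p.2 < π * g p.1})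
    (φ : ℝ × ℝ → ℂ)
    (hφdef : ∀ x y : ℝ, φ (x, y) = ((Real.sqrt (g x) : ℝ) : ℂ) * ψ (x, g x * y))
    (ψx ψy φx φy : ℝ → ℝ → ℂ)
    (hψx : ∀ x y : ℝ, ψx x y = deriv (fun t => ψ (t, y)) x)
    (hψy : ∀ x y : ℝ, ψy x y = deriv (fun t => ψ (x, t)) y)
    (hφx : ∀ x y : ℝ, φx x y = deriv (fun t => φ (t, y)) x)
    (hφy : ∀ x y : ℝ, φy x y = deriv (fun t => φ (x, t)) y)
    (ta₁ ta₂ : ℝ → ℝ → ℝ)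
    (hta₁ : ∀ x y : ℝ, ta₁ x y = a₁ (x, g x * y))
    (hta₂ : ∀ x y : ℝ, ta₂ x y = a₂ (x, g x * y)) :
    ((∫ x : ℝ, ∫ y in Set.Ioo 0 (π * g x),
        (‖Complex.I * ψx x y + (a₁ (x, y) : ℂ) * ψ (x, y)‖ ^ 2
          + ‖Complex.I * ψy x y + (a₂ (x, y) : ℂ) * ψ (x, y)‖ ^ 2) : ℝ) : ℂ)
      = ((∫ x : ℝ, ∫ y in Set.Ioo 0 π,
            (‖Complex.I * φx x y + (ta₁ x y : ℂ) * φ (x, y)‖ ^ 2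
              + ‖Complex.I * φy x y + (ta₂ x y : ℂ) * φ (x, y)‖ ^ 2) : ℝ) : ℂ)
        - ∫ x : ℝ, ∫ y in Set.Ioo 0 π,
            (((deriv g x / (2 * g x) : ℝ) : ℂ)
                * (star (φx x y) * φ (x, y) + φx x y * star (φ (x, y)))
              + ((deriv g x / g x * y : ℝ) : ℂ)
                * (star (φx x y) * φy x y + φx x y * star (φy x y))
              - Complex.I * ((ta₁ x y * deriv g x / g x * y : ℝ) : ℂ)
                * (star (φy x y) * φ (x, y) - φy x y * star (φ (x, y)))
              + (((deriv g x / (2 * g x)) ^ 2 : ℝ) : ℂ) * ((‖φ (x, y)‖ ^ 2 : ℝ) : ℂ)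
              - (((deriv g x / g x) ^ 2 * y ^ 2 : ℝ) : ℂ) * ((‖φy x y‖ ^ 2 : ℝ) : ℂ)
              + ((1 - 1 / (g x) ^ 2 : ℝ) : ℂ) * ((‖φy x y‖ ^ 2 : ℝ) : ℂ)
              + Complex.I * ((ta₂ x y * (1 - 1 / g x) : ℝ) : ℂ)
                * (φy x y * star (φ (x, y)) - star (φy x y) * φ (x, y))) := by
  have hpi : (0:ℝ) < π := Real.pi_pos
  have hgpos : ∀ x, 0 < g x := fun x => by rw [hg x]; linarith [hf0 x]
  have hgne : ∀ x, g x ≠ 0 := fun x => (hgpos x).ne'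
  have hSpos : ∀ x, 0 < Real.sqrt (g x) := fun x => Real.sqrt_pos.mpr (hgpos x)
  have hsq : ∀ x, Real.sqrt (g x) ^ 2 = g x := fun x => Real.sq_sqrt (hgpos x).le
  have hgc : ContDiff ℝ 1 g := by
    have hgfun : g = fun x => 1 + f x := funext hg
    rw [hgfun]; exact contDiff_const.add hf
  have hgcont : Continuous g := hgc.continuous
  have hgdiff : Differentiable ℝ g := hgc.differentiable one_ne_zero
  have hdc : Continuous (deriv g) := hgc.continuous_deriv le_rfl
  have hgd : ∀ x, HasDerivAt g (deriv g x) x := fun x => (hgdiff x).hasDerivAt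
  have hψd : Differentiable ℝ ψ := hψ.differentiable (by simp)
  have hψcont : Continuous ψ := hψ.continuous
  set P : ℝ × ℝ → ℂ := fun p => fderiv ℝ ψ p (1, 0) with hPdef
  set Q : ℝ × ℝ → ℂ := fun p => fderiv ℝ ψ p (0, 1) with hQdef
  have hPc : Continuous P := (hψ.continuous_fderiv (by simp)).clm_apply continuous_const
  have hQc : Continuous Q := (hψ.continuous_fderiv (by simp)).clm_apply continuous_const
  have hψxP : ∀ x y, ψx x y = P (x, y) := by
    intro x y
    rw [hψx]
    exact ((hψd (x, y)).hasFDerivAt.comp_hasDerivAt x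
      ((hasDerivAt_id x).prodMk (hasDerivAt_const x y))).deriv
  have hψyQ : ∀ x y, ψy x y = Q (x, y) := by
    intro x y
    rw [hψy]
    exact ((hψd (x, y)).hasFDerivAt.comp_hasDerivAt y
      ((hasDerivAt_const y x).prodMk (hasDerivAt_id y))).deriv
  have hfd1 : ∀ (z : ℝ × ℝ) (c : ℝ), fderiv ℝ ψ z (1, c) = P z + (c : ℂ) * Q z := by
    intro z c
    have h : ((1 : ℝ), c) = ((1:ℝ), (0:ℝ)) + c • ((0:ℝ), (1:ℝ)) := by simp
    rw [h, map_add, _root_.map_smul, Complex.real_smul]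
  have hfd2 : ∀ (z : ℝ × ℝ) (c : ℝ), fderiv ℝ ψ z ((0:ℝ), c) = (c : ℂ) * Q z := by
    intro z c
    have h : ((0 : ℝ), c) = c • ((0:ℝ), (1:ℝ)) := by simp
    rw [h, _root_.map_smul, Complex.real_smul]
  have hSd : ∀ x, HasDerivAt (fun t => Real.sqrt (g t)) (deriv g x / (2 * Real.sqrt (g x))) x := by
    intro x
    have h := (Real.hasDerivAt_sqrt (hgne x)).comp x (hgd x)
    refine h.congr_deriv ?_
    · ring
  -- the transported functions, jointly in (x, y)
  set Φ : ℝ × ℝ → ℂ := fun p => ((Real.sqrt (g p.1) : ℝ) : ℂ) * ψ (p.1, g p.1 * p.2) with hΦdef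
  set Φx : ℝ × ℝ → ℂ := fun p =>
      ((deriv g p.1 / (2 * Real.sqrt (g p.1)) : ℝ) : ℂ) * ψ (p.1, g p.1 * p.2)
      + ((Real.sqrt (g p.1) : ℝ) : ℂ) * (P (p.1, g p.1 * p.2)
          + ((deriv g p.1 * p.2 : ℝ) : ℂ) * Q (p.1, g p.1 * p.2)) with hΦxdef
  set Φy : ℝ × ℝ → ℂ := fun p =>
      ((Real.sqrt (g p.1) : ℝ) : ℂ) * (((g p.1 : ℝ) : ℂ) * Q (p.1, g p.1 * p.2)) with hΦydef
  have hφΦ : ∀ x y, φ (x, y) = Φ (x, y) := fun x y => hφdef x y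
  have hφxΦ : ∀ x y, φx x y = Φx (x, y) := by
    intro x y
    rw [hφx]
    have hinner : HasDerivAt (fun t => (t, g t * y)) ((1:ℝ), deriv g x * y) x :=
      (hasDerivAt_id x).prodMk ((hgd x).mul_const y)
    have h1 := (hψd (x, g x * y)).hasFDerivAt.comp_hasDerivAt x hinner
    rw [hfd1] at h1
    have h2 : HasDerivAt (fun t => ((Real.sqrt (g t) : ℝ) : ℂ))
        ((deriv g x / (2 * Real.sqrt (g x)) : ℝ) : ℂ) x := (hSd x).ofReal_comp
    have h3 : HasDerivAt (fun t => ((Real.sqrt (g t) : ℝ) : ℂ) * ψ (t, g t * y))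
        (((deriv g x / (2 * Real.sqrt (g x)) : ℝ) : ℂ) * ψ (x, g x * y)
          + ((Real.sqrt (g x) : ℝ) : ℂ) * (P (x, g x * y)
            + ((deriv g x * y : ℝ) : ℂ) * Q (x, g x * y))) x := h2.mul h1
    have heq : (fun t => φ (t, y)) = fun t => ((Real.sqrt (g t) : ℝ) : ℂ) * ψ (t, g t * y) :=
      funext fun t => hφdef t y
    rw [heq, h3.deriv, hΦxdef]
  have hΦyD : ∀ x y, HasDerivAt (fun t => φ (x, t)) (Φy (x, y)) y := by
    intro x y
    have hmul : HasDerivAt (fun t : ℝ => g x * t) (g x) y := by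
      simpa using (hasDerivAt_id y).const_mul (g x)
    have hinner : HasDerivAt (fun t : ℝ => (x, g x * t)) ((0:ℝ), g x) y :=
      (hasDerivAt_const y x).prodMk hmul
    have h1 := (hψd (x, g x * y)).hasFDerivAt.comp_hasDerivAt y hinner
    rw [hfd2] at h1
    have h2 := h1.const_mul (((Real.sqrt (g x) : ℝ) : ℂ))
    have heq : (fun t => φ (x, t)) = fun t => ((Real.sqrt (g x) : ℝ) : ℂ) * ψ (x, g x * t) :=
      funext fun t => hφdef x t
    rw [heq, hΦydef]
    exact h2
  have hφyΦ : ∀ x y, φy x y = Φy (x, y) := by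
    intro x y; rw [hφy]; exact (hΦyD x y).deriv
  have hΦyD' : ∀ x y, HasDerivAt (fun t => Φ (x, t)) (Φy (x, y)) y := by
    intro x y
    have h := hΦyD x y
    have heq : (fun t => φ (x, t)) = fun t => Φ (x, t) := funext fun t => hφΦ x t
    rwa [heq] at h
  -- vanishing at the top boundary and outside a compact set of x
  have hψvan : ∀ p : ℝ × ℝ, p ∉ tsupport ψ → ψ p = 0 := fun p hp =>
    image_eq_zero_of_notMem_tsupport hp
  have hψtop : ∀ x, ψ (x, g x * π) = 0 := by
    intro x
    apply hψvan
    intro hmem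
    have h := hψsub hmem
    simp only [Set.mem_setOf_eq] at h
    have := h.2
    rw [mul_comm] at this
    exact lt_irrefl _ this
  set K : Set ℝ := Prod.fst '' tsupport ψ with hKdef
  have hKc : IsCompact K := hψsupp.image continuous_fst
  have hψK : ∀ x, x ∉ K → ∀ y, ψ (x, y) = 0 := fun x hx y =>
    hψvan _ (fun hmem => hx ⟨(x, y), hmem, rfl⟩)
  have hPQK : ∀ x, x ∉ K → ∀ y, P (x, y) = 0 ∧ Q (x, y) = 0 := by
    intro x hx y
    have hopen : IsOpen ((Kᶜ : Set ℝ) ×ˢ (Set.univ : Set ℝ)) :=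
      hKc.isClosed.isOpen_compl.prod isOpen_univ
    have hev : ψ =ᶠ[nhds (x, y)] (fun _ => 0) := by
      filter_upwards [hopen.mem_nhds (by exact ⟨hx, trivial⟩)] with z hz
      exact hψK z.1 hz.1 z.2
    have hfeq : fderiv ℝ ψ (x, y) = fderiv ℝ (fun _ => (0:ℂ)) (x, y) := hev.fderiv_eq
    refine ⟨?_, ?_⟩ <;> simp only [hPdef, hQdef] <;> simp [hfeq]
  -- joint continuity
  have hprojc : Continuous fun p : ℝ × ℝ => ((p.1, g p.1 * p.2) : ℝ × ℝ) :=
    continuous_fst.prodMk ((hgcont.comp continuous_fst).mul continuous_snd)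
  have hg1c : Continuous fun p : ℝ × ℝ => g p.1 := hgcont.comp continuous_fst
  have hsqrtc : Continuous fun p : ℝ × ℝ => Real.sqrt (g p.1) :=
    Real.continuous_sqrt.comp hg1c
  have hd1c : Continuous fun p : ℝ × ℝ => deriv g p.1 := hdc.comp continuous_fst
  have hΦc : Continuous Φ := by
    rw [hΦdef]
    exact (Complex.continuous_ofReal.comp hsqrtc).mul (hψcont.comp hprojc)
  have hΦxc : Continuous Φx := by
    rw [hΦxdef]
    refine ((Complex.continuous_ofReal.comp (hd1c.div (continuous_const.mul hsqrtc)
      (fun p => (mul_pos two_pos (hSpos p.1)).ne'))).mul (hψcont.comp hprojc)).add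
      ((Complex.continuous_ofReal.comp hsqrtc).mul ((hPc.comp hprojc).add
        ((Complex.continuous_ofReal.comp (hd1c.mul continuous_snd)).mul (hQc.comp hprojc))))
  have hΦyc : Continuous Φy := by
    rw [hΦydef]
    exact (Complex.continuous_ofReal.comp hsqrtc).mul
      ((Complex.continuous_ofReal.comp hg1c).mul (hQc.comp hprojc))
  -- the straight-strip integrands
  set cA : ℝ × ℝ → ℝ := fun p =>
      ‖Complex.I * Φx p + ((a₁ (p.1, g p.1 * p.2) : ℝ) : ℂ) * Φ p‖ ^ 2
      + ‖Complex.I * Φy p + ((a₂ (p.1, g p.1 * p.2) : ℝ) : ℂ) * Φ p‖ ^ 2 with hcAdef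
  set cB : ℝ × ℝ → ℂ := fun p =>
      ((deriv g p.1 / (2 * g p.1) : ℝ) : ℂ) * (star (Φx p) * Φ p + Φx p * star (Φ p))
      + ((deriv g p.1 / g p.1 * p.2 : ℝ) : ℂ) * (star (Φx p) * Φy p + Φx p * star (Φy p))
      - Complex.I * ((a₁ (p.1, g p.1 * p.2) * deriv g p.1 / g p.1 * p.2 : ℝ) : ℂ)
          * (star (Φy p) * Φ p - Φy p * star (Φ p))
      + (((deriv g p.1 / (2 * g p.1)) ^ 2 : ℝ) : ℂ) * ((‖Φ p‖ ^ 2 : ℝ) : ℂ)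
      - (((deriv g p.1 / g p.1) ^ 2 * p.2 ^ 2 : ℝ) : ℂ) * ((‖Φy p‖ ^ 2 : ℝ) : ℂ)
      + ((1 - 1 / (g p.1) ^ 2 : ℝ) : ℂ) * ((‖Φy p‖ ^ 2 : ℝ) : ℂ)
      + Complex.I * ((a₂ (p.1, g p.1 * p.2) * (1 - 1 / g p.1) : ℝ) : ℂ)
          * (Φy p * star (Φ p) - star (Φy p) * Φ p) with hcBdef
  set cE : ℝ × ℝ → ℂ := fun p =>
      ((-(deriv g p.1) ^ 2 / (2 * (g p.1) ^ 2) : ℝ) : ℂ)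
        * (Φ p * star (Φ p) + ((p.2 : ℝ) : ℂ) * (star (Φ p) * Φy p + Φ p * star (Φy p))) with hcEdef
  have hca1c : Continuous fun p : ℝ × ℝ => a₁ (p.1, g p.1 * p.2) := hc₁.comp hprojc
  have hca2c : Continuous fun p : ℝ × ℝ => a₂ (p.1, g p.1 * p.2) := hc₂.comp hprojc
  have hcAc : Continuous cA := by
    rw [hcAdef]
    exact (((continuous_const.mul hΦxc).add
        ((Complex.continuous_ofReal.comp hca1c).mul hΦc)).norm.pow 2).add
      (((continuous_const.mul hΦyc).add
        ((Complex.continuous_ofReal.comp hca2c).mul hΦc)).norm.pow 2)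
  have hdiv1c : Continuous fun p : ℝ × ℝ => deriv g p.1 / (2 * g p.1) :=
    hd1c.div (continuous_const.mul hg1c) (fun p => (mul_pos two_pos (hgpos p.1)).ne')
  have hdiv2c : Continuous fun p : ℝ × ℝ => deriv g p.1 / g p.1 :=
    hd1c.div hg1c (fun p => hgne p.1)
  have hcBc : Continuous cB := by
    rw [hcBdef]
    refine ((((((Complex.continuous_ofReal.comp hdiv1c).mul
      ((hΦxc.star.mul hΦc).add (hΦxc.mul hΦc.star))).add
      ((Complex.continuous_ofReal.comp (hdiv2c.mul continuous_snd)).mul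
        ((hΦxc.star.mul hΦyc).add (hΦxc.mul hΦyc.star)))).sub
      ((continuous_const.mul (Complex.continuous_ofReal.comp
        (((hca1c.mul hd1c).div hg1c (fun p => hgne p.1)).mul continuous_snd))).mul
        ((hΦyc.star.mul hΦc).sub (hΦyc.mul hΦc.star)))).add
      ((Complex.continuous_ofReal.comp (hdiv1c.pow 2)).mul
        (Complex.continuous_ofReal.comp (hΦc.norm.pow 2)))).sub
      ((Complex.continuous_ofReal.comp ((hdiv2c.pow 2).mul (continuous_snd.pow 2))).mul
        (Complex.continuous_ofReal.comp (hΦyc.norm.pow 2)))).add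
      ((Complex.continuous_ofReal.comp (continuous_const.sub
        (continuous_const.div (hg1c.pow 2) (fun p => pow_ne_zero 2 (hgne p.1))))).mul
        (Complex.continuous_ofReal.comp (hΦyc.norm.pow 2))) |>.add
      ((continuous_const.mul (Complex.continuous_ofReal.comp
        (hca2c.mul (continuous_const.sub (continuous_const.div hg1c (fun p => hgne p.1)))))).mul
        ((hΦyc.mul hΦc.star).sub (hΦyc.star.mul hΦc)))
  have hcEc : Continuous cE := by
    rw [hcEdef]
    exact (Complex.continuous_ofReal.comp (((hd1c.pow 2).neg).div
        (continuous_const.mul (hg1c.pow 2)) (fun p => (mul_pos two_pos (pow_pos (hgpos p.1) 2)).ne'))).mul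
      ((hΦc.mul hΦc.star).add ((Complex.continuous_ofReal.comp continuous_snd).mul
        ((hΦc.star.mul hΦyc).add (hΦc.mul hΦyc.star))))
  -- vanishing of the straight-strip integrands off K
  have hΦK : ∀ x, x ∉ K → ∀ y, Φ (x, y) = 0 ∧ Φx (x, y) = 0 ∧ Φy (x, y) = 0 := by
    intro x hx y
    refine ⟨?_, ?_, ?_⟩ <;>
      simp [hΦdef, hΦxdef, hΦydef, hψK x hx, (hPQK x hx _).1, (hPQK x hx _).2]
  -- THE pointwise algebraic identity
  have key : ∀ x y : ℝ,
      ((g x * (‖Complex.I * ψx x (g x * y) + (a₁ (x, g x * y) : ℂ) * ψ (x, g x * y)‖ ^ 2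
          + ‖Complex.I * ψy x (g x * y) + (a₂ (x, g x * y) : ℂ) * ψ (x, g x * y)‖ ^ 2) : ℝ) : ℂ)
      = ((cA (x, y) : ℝ) : ℂ) - cB (x, y) - cE (x, y) := by
    intro x y
    have hns : ∀ z : ℂ, ((‖z‖ ^ 2 : ℝ) : ℂ) = z * (starRingEnd ℂ) z := fun z => by
      rw [Complex.mul_conj, Complex.normSq_eq_norm_sq]
    simp only [hψxP, hψyQ, hcAdef, hcBdef, hcEdef, hΦdef, hΦxdef, hΦydef]
    set S : ℝ := Real.sqrt (g x) with hSdef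
    have hS : 0 < S := hSpos x
    have hS0 : (S : ℂ) ≠ 0 := Complex.ofReal_ne_zero.mpr hS.ne'
    have hST : (S:ℂ) * (S:ℂ)⁻¹ = 1 := mul_inv_cancel₀ hS0
    rw [show g x = S ^ 2 from (hsq x).symm]
    generalize ψ (x, S ^ 2 * y) = u
    generalize P (x, S ^ 2 * y) = p
    generalize Q (x, S ^ 2 * y) = q
    generalize a₁ (x, S ^ 2 * y) = A1
    generalize a₂ (x, S ^ 2 * y) = A2
    generalize deriv g x = H
    simp only [Complex.ofReal_mul, Complex.ofReal_add, hns, RCLike.star_def, map_add, map_mul,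
      map_sub, map_one, Complex.conj_ofReal, Complex.conj_I]
    push_cast
    linear_combination ((1/2:ℂ)*(H:ℂ)*(starRingEnd ℂ) u*p + (1/2:ℂ)*(H:ℂ)*u*(starRingEnd ℂ) p + (1/2:ℂ)*(H:ℂ)^2*(y:ℂ)*(starRingEnd ℂ) u*q + (1/2:ℂ)*(H:ℂ)^2*(y:ℂ)*u*(starRingEnd ℂ) q + (1/2:ℂ)*Complex.I^2*(H:ℂ)*(starRingEnd ℂ) u*p + (1/2:ℂ)*Complex.I^2*(H:ℂ)*u*(starRingEnd ℂ) p + (1/2:ℂ)*Complex.I^2*(H:ℂ)^2*(y:ℂ)*(starRingEnd ℂ) u*q + (1/2:ℂ)*Complex.I^2*(H:ℂ)^2*(y:ℂ)*u*(starRingEnd ℂ) q + (1/4:ℂ)*(S:ℂ)⁻¹^2*(H:ℂ)^2*u*(starRingEnd ℂ) u + (1/2:ℂ)*(S:ℂ)*(S:ℂ)⁻¹*(H:ℂ)*(starRingEnd ℂ) u*p + (1/2:ℂ)*(S:ℂ)*(S:ℂ)⁻¹*(H:ℂ)*u*(starRingEnd ℂ) p + (1/2:ℂ)*(S:ℂ)*(S:ℂ)⁻¹*(H:ℂ)^2*(y:ℂ)*(starRingEnd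 ℂ) u*q + (1/2:ℂ)*(S:ℂ)*(S:ℂ)⁻¹*(H:ℂ)^2*(y:ℂ)*u*(starRingEnd ℂ) q + (-1/4:ℂ)*(S:ℂ)*(S:ℂ)⁻¹^3*(H:ℂ)^2*u*(starRingEnd ℂ) u + (-1/1:ℂ)*(S:ℂ)^2*q*(starRingEnd ℂ) q + (1/1:ℂ)*(S:ℂ)^2*(H:ℂ)*(y:ℂ)*(starRingEnd ℂ) p*q + (1/1:ℂ)*(S:ℂ)^2*(H:ℂ)*(y:ℂ)*p*(starRingEnd ℂ) q + (1/1:ℂ)*(S:ℂ)^2*(H:ℂ)^2*(y:ℂ)^2*q*(starRingEnd ℂ) q + (-1/1:ℂ)*(S:ℂ)^2*Complex.I*(A2:ℂ)*(starRingEnd ℂ) u*q + (1/1:ℂ)*(S:ℂ)^2*Complex.I*(A2:ℂ)*u*(starRingEnd ℂ) q + (1/1:ℂ)*(S:ℂ)^2*Complex.I*(H:ℂ)*(y:ℂ)*(A1:ℂ)*(starRingEnd ℂ) u*q + (-1/1:ℂ)*(S:ℂ)^2*Complex.I*(H:ℂ)*(y:ℂ)*(A1:ℂ)*u*(starRingEnd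 ℂ) q + (-1/1:ℂ)*(S:ℂ)^3*(S:ℂ)⁻¹*q*(starRingEnd ℂ) q + (1/1:ℂ)*(S:ℂ)^3*(S:ℂ)⁻¹*(H:ℂ)*(y:ℂ)*(starRingEnd ℂ) p*q + (1/1:ℂ)*(S:ℂ)^3*(S:ℂ)⁻¹*(H:ℂ)*(y:ℂ)*p*(starRingEnd ℂ) q + (1/1:ℂ)*(S:ℂ)^3*(S:ℂ)⁻¹*(H:ℂ)^2*(y:ℂ)^2*q*(starRingEnd ℂ) q + (-1/1:ℂ)*(S:ℂ)^3*(S:ℂ)⁻¹*Complex.I*(A2:ℂ)*(starRingEnd ℂ) u*q + (1/1:ℂ)*(S:ℂ)^3*(S:ℂ)⁻¹*Complex.I*(A2:ℂ)*u*(starRingEnd ℂ) q + (1/1:ℂ)*(S:ℂ)^3*(S:ℂ)⁻¹*Complex.I*(H:ℂ)*(y:ℂ)*(A1:ℂ)*(starRingEnd ℂ) u*q + (-1/1:ℂ)*(S:ℂ)^3*(S:ℂ)⁻¹*Complex.I*(H:ℂ)*(y:ℂ)*(A1:ℂ)*u*(starRingEnd ℂ) q + (-1/2:ℂ)*(S:ℂ)^3*(S:ℂ)⁻¹^3*(H:ℂ)^2*(y:ℂ)*(starRingEnd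 ℂ) u*q + (-1/2:ℂ)*(S:ℂ)^3*(S:ℂ)⁻¹^3*(H:ℂ)^2*(y:ℂ)*u*(starRingEnd ℂ) q + (-1/1:ℂ)*(S:ℂ)^4*(S:ℂ)⁻¹^2*q*(starRingEnd ℂ) q + (-1/1:ℂ)*(S:ℂ)^4*(S:ℂ)⁻¹^2*(H:ℂ)^2*(y:ℂ)^2*q*(starRingEnd ℂ) q + (-1/1:ℂ)*(S:ℂ)^5*(S:ℂ)⁻¹^3*q*(starRingEnd ℂ) q + (-1/1:ℂ)*(S:ℂ)^5*(S:ℂ)⁻¹^3*(H:ℂ)^2*(y:ℂ)^2*q*(starRingEnd ℂ) q) * hST + ((1/2:ℂ)*(H:ℂ)*(starRingEnd ℂ) u*p + (1/2:ℂ)*(H:ℂ)*u*(starRingEnd ℂ) p + (1/2:ℂ)*(H:ℂ)^2*(y:ℂ)*(starRingEnd ℂ) u*q + (1/2:ℂ)*(H:ℂ)^2*(y:ℂ)*u*(starRingEnd ℂ) q + (1/4:ℂ)*(S:ℂ)⁻¹^2*(H:ℂ)^2*u*(starRingEnd ℂ) u + (-1/1:ℂ)*(S:ℂ)^2*q*(starRingEnd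 ℂ) q + (1/1:ℂ)*(S:ℂ)^2*(H:ℂ)*(y:ℂ)*(starRingEnd ℂ) p*q + (1/1:ℂ)*(S:ℂ)^2*(H:ℂ)*(y:ℂ)*p*(starRingEnd ℂ) q + (1/1:ℂ)*(S:ℂ)^2*(H:ℂ)^2*(y:ℂ)^2*q*(starRingEnd ℂ) q + (1/1:ℂ)*(S:ℂ)^6*q*(starRingEnd ℂ) q) * Complex.I_mul_I
  -- per-slice identity: change of variables + fundamental theorem of calculus
  have innerEq : ∀ x : ℝ,
      ((∫ y in Set.Ioo 0 (π * g x),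
          (‖Complex.I * ψx x y + (a₁ (x, y) : ℂ) * ψ (x, y)‖ ^ 2
            + ‖Complex.I * ψy x y + (a₂ (x, y) : ℂ) * ψ (x, y)‖ ^ 2) : ℝ) : ℂ)
      = ((∫ y in Set.Ioo 0 π, cA (x, y) : ℝ) : ℂ) - ∫ y in Set.Ioo 0 π, cB (x, y) := by
    intro x
    set F : ℝ → ℝ := fun y =>
      ‖Complex.I * ψx x y + (a₁ (x, y) : ℂ) * ψ (x, y)‖ ^ 2
        + ‖Complex.I * ψy x y + (a₂ (x, y) : ℂ) * ψ (x, y)‖ ^ 2 with hFdef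
    have hyc : Continuous fun y : ℝ => ((x, y) : ℝ × ℝ) := continuous_const.prodMk continuous_id
    have hcAy : Continuous fun y => cA (x, y) := hcAc.comp hyc
    have hcBy : Continuous fun y => cB (x, y) := hcBc.comp hyc
    have hcEy : Continuous fun y => cE (x, y) := hcEc.comp hyc
    have icA : IntegrableOn (fun y => ((cA (x, y) : ℝ) : ℂ)) (Set.Ioo 0 π) :=
      ((Complex.continuous_ofReal.comp hcAy).integrableOn_Icc).mono_set Set.Ioo_subset_Icc_self
    have icB : IntegrableOn (fun y => cB (x, y)) (Set.Ioo 0 π) :=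
      (hcBy.integrableOn_Icc).mono_set Set.Ioo_subset_Icc_self
    have icE : IntegrableOn (fun y => cE (x, y)) (Set.Ioo 0 π) :=
      (hcEy.integrableOn_Icc).mono_set Set.Ioo_subset_Icc_self
    have hE0 : (∫ y in Set.Ioo 0 π, cE (x, y)) = 0 := by
      have hWd : ∀ y : ℝ, HasDerivAt (fun t : ℝ => ((t : ℝ) : ℂ) * (Φ (x, t) * star (Φ (x, t))))
          (Φ (x, y) * star (Φ (x, y))
            + ((y : ℝ) : ℂ) * (star (Φ (x, y)) * Φy (x, y) + Φ (x, y) * star (Φy (x, y)))) y := by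
        intro y
        have h1 : HasDerivAt (fun t => Φ (x, t)) (Φy (x, y)) y := hΦyD' x y
        have h2 : HasDerivAt (fun t => star (Φ (x, t))) (star (Φy (x, y))) y := h1.star
        have h3 := h1.mul h2
        have h4 : HasDerivAt (fun t : ℝ => ((t : ℝ) : ℂ)) 1 y := Complex.ofRealCLM.hasDerivAt
        have h5 := h4.mul h3
        refine h5.congr_deriv ?_
        simp only [Pi.mul_apply]
        ring
      have hΦz : Continuous fun y => Φ (x, y) := hΦc.comp hyc
      have hΦyz : Continuous fun y => Φy (x, y) := hΦyc.comp hyc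
      have hWc : Continuous fun y : ℝ => Φ (x, y) * star (Φ (x, y))
          + ((y : ℝ) : ℂ) * (star (Φ (x, y)) * Φy (x, y) + Φ (x, y) * star (Φy (x, y))) :=
        (hΦz.mul hΦz.star).add (Complex.continuous_ofReal.mul
          ((hΦz.star.mul hΦyz).add (hΦz.mul hΦyz.star)))
      have hFTC : (∫ y in (0:ℝ)..π, (Φ (x, y) * star (Φ (x, y))
            + ((y : ℝ) : ℂ) * (star (Φ (x, y)) * Φy (x, y) + Φ (x, y) * star (Φy (x, y))))) =
          ((π : ℝ) : ℂ) * (Φ (x, π) * star (Φ (x, π)))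
            - ((0 : ℝ) : ℂ) * (Φ (x, 0) * star (Φ (x, 0))) :=
        intervalIntegral.integral_eq_sub_of_hasDerivAt (fun y _ => hWd y)
          (hWc.intervalIntegrable 0 π)
      have hΦtop : Φ (x, π) = 0 := by
        rw [hΦdef]
        simp [hψtop x]
      have hsplit : (∫ y in Set.Ioo 0 π, cE (x, y)) =
          ((-(deriv g x) ^ 2 / (2 * (g x) ^ 2) : ℝ) : ℂ) * ∫ y in Set.Ioo 0 π,
            (Φ (x, y) * star (Φ (x, y))
              + ((y : ℝ) : ℂ) * (star (Φ (x, y)) * Φy (x, y) + Φ (x, y) * star (Φy (x, y)))) := by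
        rw [← integral_const_mul]
      rw [hsplit, ← integral_Ioc_eq_integral_Ioo, ← intervalIntegral.integral_of_le hpi.le, hFTC,
        hΦtop]
      simp
    have hcov : (∫ y in Set.Ioo 0 (π * g x), F y) = ∫ y in Set.Ioo 0 π, g x * F (g x * y) := by
      have h2 := intervalIntegral.smul_integral_comp_mul_left F (a := 0) (b := π) (g x)
      rw [mul_zero] at h2
      calc (∫ y in Set.Ioo 0 (π * g x), F y)
          = ∫ y in (0:ℝ)..(π * g x), F y := by
            rw [intervalIntegral.integral_of_le (mul_nonneg hpi.le (hgpos x).le), integral_Ioc_eq_integral_Ioo]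
        _ = ∫ y in (0:ℝ)..(g x * π), F y := by rw [mul_comm]
        _ = g x • ∫ y in (0:ℝ)..π, F (g x * y) := h2.symm
        _ = ∫ y in (0:ℝ)..π, g x * F (g x * y) := by
            rw [intervalIntegral.integral_const_mul, smul_eq_mul]
        _ = ∫ y in Set.Ioo 0 π, g x * F (g x * y) := by
            rw [intervalIntegral.integral_of_le hpi.le, integral_Ioc_eq_integral_Ioo]
    calc ((∫ y in Set.Ioo 0 (π * g x), F y : ℝ) : ℂ)
        = ((∫ y in Set.Ioo 0 π, g x * F (g x * y) : ℝ) : ℂ) := by rw [hcov]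
      _ = ∫ y in Set.Ioo 0 π, ((g x * F (g x * y) : ℝ) : ℂ) := integral_ofReal.symm
      _ = ∫ y in Set.Ioo 0 π, (((cA (x, y) : ℝ) : ℂ) - cB (x, y) - cE (x, y)) := by
          refine integral_congr_ae (Filter.Eventually.of_forall fun y => ?_)
          exact key x y
      _ = (∫ y in Set.Ioo 0 π, (((cA (x, y) : ℝ) : ℂ) - cB (x, y)))
            - ∫ y in Set.Ioo 0 π, cE (x, y) := integral_sub (icA.sub icB) icE
      _ = ((∫ y in Set.Ioo 0 π, ((cA (x, y) : ℝ) : ℂ)) - ∫ y in Set.Ioo 0 π, cB (x, y))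
            - ∫ y in Set.Ioo 0 π, cE (x, y) := by rw [integral_sub icA icB]
      _ = (∫ y in Set.Ioo 0 π, ((cA (x, y) : ℝ) : ℂ)) - ∫ y in Set.Ioo 0 π, cB (x, y) := by
          rw [hE0, sub_zero]
      _ = ((∫ y in Set.Ioo 0 π, cA (x, y) : ℝ) : ℂ) - ∫ y in Set.Ioo 0 π, cB (x, y) :=
          congrArg (fun r => r - ∫ y in Set.Ioo 0 π, cB (x, y)) integral_ofReal
  -- rewrite the straight-strip integrands in the goal
  have hAeq : ∀ x y : ℝ,
      ‖Complex.I * φx x y + (ta₁ x y : ℂ) * φ (x, y)‖ ^ 2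
        + ‖Complex.I * φy x y + (ta₂ x y : ℂ) * φ (x, y)‖ ^ 2 = cA (x, y) := by
    intro x y
    rw [hφxΦ, hφyΦ, hφΦ, hta₁, hta₂, hcAdef]
  have hBeq : ∀ x y : ℝ,
      (((deriv g x / (2 * g x) : ℝ) : ℂ)
          * (star (φx x y) * φ (x, y) + φx x y * star (φ (x, y)))
        + ((deriv g x / g x * y : ℝ) : ℂ)
          * (star (φx x y) * φy x y + φx x y * star (φy x y))
        - Complex.I * ((ta₁ x y * deriv g x / g x * y : ℝ) : ℂ)
          * (star (φy x y) * φ (x, y) - φy x y * star (φ (x, y)))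
        + (((deriv g x / (2 * g x)) ^ 2 : ℝ) : ℂ) * ((‖φ (x, y)‖ ^ 2 : ℝ) : ℂ)
        - (((deriv g x / g x) ^ 2 * y ^ 2 : ℝ) : ℂ) * ((‖φy x y‖ ^ 2 : ℝ) : ℂ)
        + ((1 - 1 / (g x) ^ 2 : ℝ) : ℂ) * ((‖φy x y‖ ^ 2 : ℝ) : ℂ)
        + Complex.I * ((ta₂ x y * (1 - 1 / g x) : ℝ) : ℂ)
          * (φy x y * star (φ (x, y)) - star (φy x y) * φ (x, y))) = cB (x, y) := by
    intro x y
    rw [hφxΦ, hφyΦ, hφΦ, hta₁, hta₂, hcBdef]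
  -- integrability in x
  have hIA : Integrable (fun x => ∫ y in Set.Ioo (0:ℝ) π, cA (x, y)) := by
    have hcont : Continuous fun x => ∫ y in Set.Icc (0:ℝ) π, cA (x, y) :=
      continuous_parametric_integral_of_continuous (by exact hcAc) isCompact_Icc
    have heqf : (fun x => ∫ y in Set.Ioo (0:ℝ) π, cA (x, y))
        = fun x => ∫ y in Set.Icc (0:ℝ) π, cA (x, y) := by
      funext x; rw [integral_Icc_eq_integral_Ioo]
    rw [heqf]
    apply hcont.integrable_of_hasCompactSupport
    apply HasCompactSupport.intro hKc
    intro x hx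
    have hzero : ∀ y : ℝ, cA (x, y) = 0 := by
      intro y
      have h := hΦK x hx y
      rw [hcAdef]
      simp [h.1, h.2.1, h.2.2]
    simp [hzero]
  have hIB : Integrable (fun x => ∫ y in Set.Ioo (0:ℝ) π, cB (x, y)) := by
    have hcont : Continuous fun x => ∫ y in Set.Icc (0:ℝ) π, cB (x, y) :=
      continuous_parametric_integral_of_continuous (by exact hcBc) isCompact_Icc
    have heqf : (fun x => ∫ y in Set.Ioo (0:ℝ) π, cB (x, y))
        = fun x => ∫ y in Set.Icc (0:ℝ) π, cB (x, y) := by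
      funext x; rw [integral_Icc_eq_integral_Ioo]
    rw [heqf]
    apply hcont.integrable_of_hasCompactSupport
    apply HasCompactSupport.intro hKc
    intro x hx
    have hzero : ∀ y : ℝ, cB (x, y) = 0 := by
      intro y
      have h := hΦK x hx y
      rw [hcBdef]
      simp [h.1, h.2.1, h.2.2]
    simp [hzero]
  -- assemble
  simp only [hAeq, hBeq]
  refine Eq.trans integral_ofReal.symm ?_
  refine Eq.trans (integral_congr_ae (Filter.Eventually.of_forall innerEq)) ?_
  refine Eq.trans (integral_sub hIA.ofReal hIB) ?_
  exact congrArg (fun z => z - ∫ x : ℝ, ∫ y in Set.Ioo 0 π, cB (x, y)) integral_ofReal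
end

section
/- Let f : ℝ → [0, ∞) be twice continuously differentiable, set g = 1 + f, let r ∈ C_c^∞(ℝ) be real-valued, and define φ(x, y) = r(x) sin(y / g(x)) on Ω_f = {(x,y) : 0 < y < π g(x)}. Then ∫_{Ω_f} ( |φ_x(x,y)|² + |φ_y(x,y)|² − |φ(x,y)|² ) dx dy = (π/2) ∫_ℝ [ r'(x)² g(x) + r(x)² ( −g''(x)/2 + g'(x)² (2π² + 3)/(6 g(x)) + 1/g(x) − g(x) ) ] dx. -/
open MeasureTheory Real

/-- Inner integral evaluation: for `gg > 0`,
`∫_0^{π gg} ((rp sin(y/gg) + rr cos(y/gg)(-(y gp)/gg²))² + (rr cos(y/gg)/gg)² - (rr sin(y/gg))²) dy`. -/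
lemma trial_inner_integral (rr rp gg gp : ℝ) (hgg : 0 < gg) :
    (∫ y in Set.Ioo 0 (π * gg),
      ((rp * Real.sin (y / gg) + rr * (Real.cos (y / gg) * (-(y * gp) / gg ^ 2))) ^ 2
        + (rr * (Real.cos (y / gg) * (1 / gg))) ^ 2
        - (rr * Real.sin (y / gg)) ^ 2))
    = (π / 2) * (rp ^ 2 * gg + rr * rp * gp
        + rr ^ 2 * gp ^ 2 * (2 * π ^ 2 + 3) / (6 * gg) + rr ^ 2 / gg - rr ^ 2 * gg) := by
  have hb : (0 : ℝ) < π * gg := mul_pos Real.pi_pos hgg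
  have hgne : gg ≠ 0 := hgg.ne'
  set K3 : ℝ := rp ^ 2 - rr ^ 2 + rr ^ 2 / gg ^ 2 with hK3
  set Kc : ℝ := rr ^ 2 * gp ^ 2 / gg ^ 4 with hKc
  set K1 : ℝ := (rr ^ 2 / gg ^ 2 - (rp ^ 2 - rr ^ 2)) * gg / 4
      + (-(rr * rp * gp) / gg ^ 2) * gg ^ 2 / 4 - rr ^ 2 * gp ^ 2 / gg ^ 4 * gg ^ 3 / 8 with hK1
  set Kq : ℝ := rr ^ 2 * gp ^ 2 / gg ^ 4 * gg / 4 with hKq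
  set K2 : ℝ := rr * rp * gp / gg ^ 2 * gg / 2 + rr ^ 2 * gp ^ 2 / gg ^ 4 * gg ^ 2 / 4 with hK2
  set F : ℝ → ℝ := fun y => K3 * y / 2 + Kc / 6 * y ^ 3
      + (K1 + Kq * y ^ 2) * Real.sin (2 * (y / gg))
      + K2 * y * Real.cos (2 * (y / gg)) with hF
  have hderiv : ∀ y ∈ Set.uIcc 0 (π * gg), HasDerivAt F
      ((rp * Real.sin (y / gg) + rr * (Real.cos (y / gg) * (-(y * gp) / gg ^ 2))) ^ 2
        + (rr * (Real.cos (y / gg) * (1 / gg))) ^ 2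
        - (rr * Real.sin (y / gg)) ^ 2) y := by
    intro y _
    have hu : HasDerivAt (fun y : ℝ => 2 * (y / gg)) (2 * (1 / gg)) y :=
      ((hasDerivAt_id y).div_const gg).const_mul 2
    have hs : HasDerivAt (fun y : ℝ => Real.sin (2 * (y / gg)))
        (Real.cos (2 * (y / gg)) * (2 * (1 / gg))) y := (Real.hasDerivAt_sin _).comp y hu
    have hc : HasDerivAt (fun y : ℝ => Real.cos (2 * (y / gg)))
        (-Real.sin (2 * (y / gg)) * (2 * (1 / gg))) y := (Real.hasDerivAt_cos _).comp y hu
    have hP : HasDerivAt (fun y : ℝ => K3 * y / 2 + Kc / 6 * y ^ 3)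
        (K3 * 1 / 2 + Kc / 6 * (3 * y ^ 2)) y := by
      have h1 : HasDerivAt (fun y : ℝ => K3 * y / 2) (K3 * 1 / 2) y :=
        ((hasDerivAt_id y).const_mul K3).div_const 2
      have h2 : HasDerivAt (fun y : ℝ => Kc / 6 * y ^ 3) (Kc / 6 * (3 * y ^ 2)) y := by
        simpa using (hasDerivAt_pow 3 y).const_mul (Kc / 6)
      exact h1.add h2
    have hSq : HasDerivAt (fun y : ℝ => K1 + Kq * y ^ 2) (Kq * (2 * y)) y := by
      simpa using (hasDerivAt_pow 2 y).const_mul Kq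
    have hK2y : HasDerivAt (fun y : ℝ => K2 * y) (K2 * 1) y := (hasDerivAt_id y).const_mul K2
    have hFtot : HasDerivAt F _ y := ((hP.add (hSq.mul hs)).add (hK2y.mul hc))
    convert hFtot using 1
    simp only [hK3, hKc, hK1, hKq, hK2]
    rw [Real.sin_two_mul, Real.cos_two_mul]
    have hsc := Real.sin_sq_add_cos_sq (y / gg)
    field_simp
    linear_combination (rp ^ 2 - rr ^ 2) * 384 * gg ^ 4 * hsc
  have hcont : Continuous fun y : ℝ =>
      (rp * Real.sin (y / gg) + rr * (Real.cos (y / gg) * (-(y * gp) / gg ^ 2))) ^ 2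
        + (rr * (Real.cos (y / gg) * (1 / gg))) ^ 2
        - (rr * Real.sin (y / gg)) ^ 2 := by fun_prop
  have key := intervalIntegral.integral_eq_sub_of_hasDerivAt hderiv
    (hcont.intervalIntegrable 0 (π * gg))
  rw [intervalIntegral.integral_of_le hb.le, integral_Ioc_eq_integral_Ioo] at key
  rw [key]
  have h2pi : 2 * (π * gg / gg) = 2 * π := by field_simp
  have h0 : 2 * ((0 : ℝ) / gg) = 0 := by simp
  simp only [hF, h2pi, h0, Real.sin_two_pi, Real.cos_two_pi, Real.sin_zero, Real.cos_zero,
    hK3, hKc, hK1, hKq, hK2]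
  field_simp
  ring

/-- Explicit evaluation of the Dirichlet form on the trial function
`φ(x,y) = r(x) sin(y/g(x))` over the deformed strip `Ω_f`. -/
theorem trial_function_form_evaluation
    (f : ℝ → ℝ) (hf0 : ∀ x, 0 ≤ f x) (hf : ContDiff ℝ 2 f)
    (g : ℝ → ℝ) (hg : ∀ x, g x = 1 + f x)
    (r : ℝ → ℝ) (hr : ContDiff ℝ (⊤ : ℕ∞) r) (hrsupp : HasCompactSupport r) :
    (∫ x : ℝ, ∫ y in Set.Ioo 0 (π * g x),
        ((deriv (fun t => r t * Real.sin (y / g t)) x) ^ 2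
          + (deriv (fun t => r x * Real.sin (t / g x)) y) ^ 2
          - (r x * Real.sin (y / g x)) ^ 2))
      = (π / 2) *
          ∫ x : ℝ,
            (deriv r x ^ 2 * g x
              + r x ^ 2 *
                  (-(deriv (deriv g) x) / 2
                    + deriv g x ^ 2 * (2 * π ^ 2 + 3) / (6 * g x)
                    + 1 / g x - g x)) := by
  have hgeq : g = fun x => 1 + f x := funext hg
  have hg2 : ContDiff ℝ 2 g := by rw [hgeq]; exact contDiff_const.add hf
  have hgpos : ∀ x, 0 < g x := fun x => by rw [hg x]; linarith [hf0 x]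
  have hgne : ∀ x, g x ≠ 0 := fun x => (hgpos x).ne'
  have hgd : Differentiable ℝ g := hg2.differentiable two_ne_zero
  have hg211 : ContDiff ℝ (1 + 1) g := by exact_mod_cast hg2
  have hg1 : ContDiff ℝ 1 (deriv g) := (contDiff_succ_iff_deriv.mp hg211).2.2
  have hdgd : Differentiable ℝ (deriv g) := hg1.differentiable one_ne_zero
  have hg''c : Continuous (deriv (deriv g)) := (contDiff_one_iff_deriv.mp hg1).2
  have hg'c : Continuous (deriv g) := hg1.continuous
  have hgc : Continuous g := hg2.continuous
  have hrd : Differentiable ℝ r := hr.differentiable (by simp)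
  have hr11 : ContDiff ℝ (1 + 1) r := hr.of_le (WithTop.coe_le_coe.mpr le_top)
  have hr1 : ContDiff ℝ 1 (deriv r) := (contDiff_succ_iff_deriv.mp hr11).2.2
  have hr'c : Continuous (deriv r) := hr1.continuous
  have hrc : Continuous r := hr.continuous
  have hdr : ∀ x, HasDerivAt r (deriv r x) x := fun x => (hrd x).hasDerivAt
  have hdg : ∀ x, HasDerivAt g (deriv g x) x := fun x => (hgd x).hasDerivAt
  -- pointwise derivative computations
  have hdx : ∀ x y, deriv (fun t => r t * Real.sin (y / g t)) x
      = deriv r x * Real.sin (y / g x)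
        + r x * (Real.cos (y / g x) * (-(y * deriv g x) / g x ^ 2)) := by
    intro x y
    have h : HasDerivAt (fun t => r t * Real.sin (y / g t)) (deriv r x * Real.sin (y / g x) + r x * (Real.cos (y / g x) * ((0 * g x - y * deriv g x) / g x ^ 2))) x :=
      ((hdr x).mul (((hasDerivAt_const x y).div (hdg x) (hgne x)).sin))
    rw [h.deriv]; ring
  have hdy : ∀ x y, deriv (fun t => r x * Real.sin (t / g x)) y
      = r x * (Real.cos (y / g x) * (1 / g x)) := by
    intro x y
    exact (((hasDerivAt_id y).div_const (g x)).sin.const_mul (r x)).deriv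
  -- pointwise value of the inner integral
  have key : ∀ x, (∫ y in Set.Ioo 0 (π * g x),
        ((deriv (fun t => r t * Real.sin (y / g t)) x) ^ 2
          + (deriv (fun t => r x * Real.sin (t / g x)) y) ^ 2
          - (r x * Real.sin (y / g x)) ^ 2))
      = (π / 2) * (deriv r x ^ 2 * g x + r x * deriv r x * deriv g x
          + r x ^ 2 * deriv g x ^ 2 * (2 * π ^ 2 + 3) / (6 * g x)
          + r x ^ 2 / g x - r x ^ 2 * g x) := by
    intro x
    have hcongr : ∀ y : ℝ,
        ((deriv (fun t => r t * Real.sin (y / g t)) x) ^ 2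
          + (deriv (fun t => r x * Real.sin (t / g x)) y) ^ 2
          - (r x * Real.sin (y / g x)) ^ 2)
        = ((deriv r x * Real.sin (y / g x)
              + r x * (Real.cos (y / g x) * (-(y * deriv g x) / g x ^ 2))) ^ 2
            + (r x * (Real.cos (y / g x) * (1 / g x))) ^ 2
            - (r x * Real.sin (y / g x)) ^ 2) := by
      intro y; rw [hdx x y, hdy x y]
    rw [show (fun y => ((deriv (fun t => r t * Real.sin (y / g t)) x) ^ 2
          + (deriv (fun t => r x * Real.sin (t / g x)) y) ^ 2
          - (r x * Real.sin (y / g x)) ^ 2))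
        = (fun y => ((deriv r x * Real.sin (y / g x)
              + r x * (Real.cos (y / g x) * (-(y * deriv g x) / g x ^ 2))) ^ 2
            + (r x * (Real.cos (y / g x) * (1 / g x))) ^ 2
            - (r x * Real.sin (y / g x)) ^ 2)) from funext hcongr]
    exact trial_inner_integral (r x) (deriv r x) (g x) (deriv g x) (hgpos x)
  refine (integral_congr_ae (Filter.Eventually.of_forall key)).trans ?_
  beta_reduce
  rw [MeasureTheory.integral_const_mul]
  congr 1
  -- now integration by parts in x
  set P : ℝ → ℝ := fun x => deriv r x ^ 2 * g x + r x * deriv r x * deriv g x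
      + r x ^ 2 * deriv g x ^ 2 * (2 * π ^ 2 + 3) / (6 * g x)
      + r x ^ 2 / g x - r x ^ 2 * g x with hP
  set Q : ℝ → ℝ := fun x => deriv r x ^ 2 * g x
      + r x ^ 2 * (-(deriv (deriv g) x) / 2
          + deriv g x ^ 2 * (2 * π ^ 2 + 3) / (6 * g x) + 1 / g x - g x) with hQ
  show ∫ x, P x = ∫ x, Q x
  set w : ℝ → ℝ := fun x => r x ^ 2 * deriv g x / 2 with hw
  have hwD : ∀ x, HasDerivAt w
      (r x * deriv r x * deriv g x + r x ^ 2 * deriv (deriv g) x / 2) x := by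
    intro x
    have h1 : HasDerivAt (fun x => r x ^ 2) (2 * r x * deriv r x) x := by
      have h : HasDerivAt (fun x => r x ^ 2) _ x := (hdr x).pow 2
      simpa [mul_comm] using h
    have h2 : HasDerivAt (deriv g) (deriv (deriv g) x) x := (hdgd x).hasDerivAt
    have this : HasDerivAt w _ x := (h1.mul h2).div_const 2
    convert this using 1
    ring
  have hw1 : ContDiff ℝ 1 w := (((hr.of_le (by simp)).pow 2).mul hg1).div_const 2
  have hwcs : HasCompactSupport w := by
    have : w = fun x => r x * (r x * deriv g x / 2) := by funext x; simp only [hw]; ring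
    rw [this]
    exact hrsupp.mul_right
  have hw'c : Continuous (deriv w) := hw1.continuous_deriv le_rfl
  have hwint : Integrable (deriv w) := hw'c.integrable_of_hasCompactSupport hwcs.deriv
  have hQc : Continuous Q := by
    apply Continuous.add
    · exact (hr'c.pow 2).mul hgc
    · apply (hrc.pow 2).mul
      apply Continuous.sub
      · apply Continuous.add
        · apply Continuous.add
          · exact (hg''c.neg.div_const 2)
          · exact (((hg'c.pow 2).mul continuous_const).div (continuous_const.mul hgc)
              (fun x => by simpa using hgne x))
        · exact continuous_const.div hgc hgne
      · exact hgc
  have hQcs : HasCompactSupport Q := by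
    have h1 : HasCompactSupport (fun x => deriv r x * (deriv r x * g x)) :=
      hrsupp.deriv.mul_right
    have h2 : HasCompactSupport (fun x => r x * (r x * (-(deriv (deriv g) x) / 2
        + deriv g x ^ 2 * (2 * π ^ 2 + 3) / (6 * g x) + 1 / g x - g x))) :=
      hrsupp.mul_right
    have : Q = (fun x => deriv r x * (deriv r x * g x)) + (fun x => r x * (r x
        * (-(deriv (deriv g) x) / 2
          + deriv g x ^ 2 * (2 * π ^ 2 + 3) / (6 * g x) + 1 / g x - g x))) := by
      funext x; simp only [hQ, Pi.add_apply]; ring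
    rw [this]
    exact h1.add h2
  have hQint : Integrable Q := hQc.integrable_of_hasCompactSupport hQcs
  have hPQ : ∀ x, P x = Q x + deriv w x := by
    intro x
    rw [(hwD x).deriv]
    simp only [hP, hQ]
    field_simp
    ring
  have hzero : ∫ x, deriv w x = 0 := by
    have hsplit := intervalIntegral.integral_Iic_add_Ioi (b := (0 : ℝ))
      hwint.integrableOn hwint.integrableOn
    rw [← hsplit, HasCompactSupport.integral_Iic_deriv_eq hw1 hwcs 0,
      HasCompactSupport.integral_Ioi_deriv_eq hw1 hwcs 0]
    ring
  calc ∫ x, P x = ∫ x, (Q x + deriv w x) := by simp only [hPQ]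
    _ = (∫ x, Q x) + ∫ x, deriv w x := integral_add hQint hwint
    _ = ∫ x, Q x := by rw [hzero, add_zero]
end
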